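/- arXiv:2504.18660 — 9 statements merged into one kernel-verified Lean document; each statement's English description precedes it below -/
import Mathlib

section
/- Let η : X → [0,γ] be a quasi-ordinal decomposition of X and, for each ordinal α ≤ γ, let g_α be a continuous selection for 𝓕(η⁻¹(α)). Suppose that for every limit ordinal λ ≤ γ there is a point q_λ ∈ η⁻¹(λ) such that η⁻¹(λ) is clopen modulo q_λ and g_λ is a q_λ-maximal selection for 𝓕(η⁻¹(λ)). Then the map f : 𝓕(X) → X defined by f(S) = g_{μ(S)}(S ∩ η⁻¹(μ(S))), where μ(S) = min η(S), is a continuous selection for 𝓕(X). -/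
open Set Topology Filter

universe u v

/-- The hyperspace `𝓕(X)` of all nonempty closed subsets of a topological space `X`. -/
structure NEClosed (X : Type u) [TopologicalSpace X] : Type u where
  carrier : Set X
  nonempty' : carrier.Nonempty
  closed' : IsClosed carrier

namespace NEClosed

variable {X : Type u} [TopologicalSpace X]

/-- The basic Vietoris set `⟨𝒱⟩` determined by a family `𝒱` of subsets of `X`. -/
def basicSet (𝒱 : Set (Set X)) : Set (NEClosed X) :=
  {S | S.carrier ⊆ ⋃₀ 𝒱 ∧ ∀ V ∈ 𝒱, (S.carrier ∩ V).Nonempty}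

/-- The Vietoris topology on `𝓕(X)`, generated by the sets `⟨𝒱⟩` where `𝒱` runs over the
finite families of open subsets of `X`. -/
instance : TopologicalSpace (NEClosed X) :=
  TopologicalSpace.generateFrom
    {t | ∃ 𝒱 : Set (Set X), 𝒱.Finite ∧ (∀ V ∈ 𝒱, IsOpen V) ∧ t = basicSet 𝒱}

/-- The trace of a nonempty closed set `S` on a subspace `A` which it meets, as a nonempty
closed subset of `A`. -/
def trace (S : NEClosed X) (A : Set X) (h : (S.carrier ∩ A).Nonempty) : NEClosed A where
  carrier := Subtype.val ⁻¹' S.carrier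
  nonempty' := ⟨⟨h.choose, h.choose_spec.2⟩, h.choose_spec.1⟩
  closed' := S.closed'.preimage continuous_subtype_val

end NEClosed

/-- `f` is a Vietoris continuous selection for `𝓕(X)`. -/
def IsVSelection {X : Type u} [TopologicalSpace X] (f : NEClosed X → X) : Prop :=
  Continuous f ∧ ∀ S : NEClosed X, f S ∈ S.carrier

/-- `f` is a `p`-maximal selection: `f S = p` whenever `p ∈ S`. -/
def PMaximal {X : Type u} [TopologicalSpace X] (f : NEClosed X → X) (p : X) : Prop :=
  ∀ S : NEClosed X, p ∈ S.carrier → f S = p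

/-- `f` is a `p`-minimal selection: `f S ≠ p` whenever `S ≠ {p}`. -/
def PMinimal {X : Type u} [TopologicalSpace X] (f : NEClosed X → X) (p : X) : Prop :=
  ∀ S : NEClosed X, S.carrier ≠ {p} → f S ≠ p

/-- `H` is clopen modulo the point `p`: `H` is a nonempty closed set, `p ∈ H`, and
`H \ {p}` is open. -/
def ClopenModulo {X : Type u} [TopologicalSpace X] (H : Set X) (p : X) : Prop :=
  H.Nonempty ∧ IsClosed H ∧ p ∈ H ∧ IsOpen (H \ {p})

/-- `Δ(X)`: the family of all nonempty closed subsets of `X` clopen modulo some point. -/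
def DeltaSet (X : Type u) [TopologicalSpace X] : Set (Set X) :=
  {H | ∃ p, ClopenModulo H p}

/-- `Δ_ω(X)`: all `H ∈ Δ(X)` such that `H` is clopen, or `H` is clopen modulo a point `q`
at which `H` (with the subspace topology) has a countable neighbourhood base. -/
def DeltaOmegaSet (X : Type u) [TopologicalSpace X] : Set (Set X) :=
  {H | H ∈ DeltaSet X ∧ (IsClopen H ∨ ∃ q, ∃ hq : q ∈ H,
    ClopenModulo H q ∧ (𝓝 (⟨q, hq⟩ : H)).IsCountablyGenerated)}

/-- The set `[V]_f = {x : f(Vᶜ ∪ {x}) = x}` for an open set `V`. -/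
def bracketSel {X : Type u} [TopologicalSpace X] [T1Space X]
    (f : NEClosed X → X) (V : Set X) (hV : IsOpen V) : Set X :=
  {x | f ⟨Vᶜ ∪ {x}, ⟨x, Or.inr rfl⟩, hV.isClosed_compl.union isClosed_singleton⟩ = x}

/-- The set `⟨V⟩_f = [V]_f ∩ V` for an open set `V`. -/
def angleSel {X : Type u} [TopologicalSpace X] [T1Space X]
    (f : NEClosed X → X) (V : Set X) (hV : IsOpen V) : Set X :=
  bracketSel f V hV ∩ V

/-- A quasi-ordinal decomposition of `X`: a continuous surjection onto a compact ordinal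
space `[0, γ]` all of whose fibers are clopen modulo a point. -/
def IsQuasiOrdDecomp {X : Type u} [TopologicalSpace X] (γ : Ordinal.{u})
    (η : X → Set.Iic γ) : Prop :=
  Continuous η ∧ Function.Surjective η ∧ ∀ α : Set.Iic γ, η ⁻¹' {α} ∈ DeltaSet X

/-- An ordinal decomposition of `X`: a closed quotient map onto a compact ordinal space
`[0, γ]` all of whose fibers are clopen modulo a point. -/
def IsOrdDecomp {X : Type u} [TopologicalSpace X] (γ : Ordinal.{u})
    (η : X → Set.Iic γ) : Prop :=
  IsQuotientMap η ∧ IsClosedMap η ∧ ∀ α : Set.Iic γ, η ⁻¹' {α} ∈ DeltaSet X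

/-!
Fix `S`, let `μ = min η(S)` and let `W` be an open set containing `f(S)`. Continuity of `g_μ`
gives a finite family `𝒢` of open sets such that `f(S') ∈ W` whenever `min η(S') = μ` and
`S' ∩ η⁻¹(μ) ∈ ⟨𝒢⟩`. If `S ∩ η⁻¹(μ)` lies in an open subset of the fiber, which happens when `μ`
is not a limit (the fiber is then open) or when `q_μ ∉ S`, a Vietoris neighbourhood of `S`
confines nearby sets to levels `≥ μ` and controls their trace on the fiber. If `μ` is a limit
and `q_μ ∈ S`, then `f(S) = q_μ` by maximality, and the neighbourhood lets nearby sets reach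
below `μ` only close to `q_μ` and inside `W`, so that `f` still lands in `W`.
-/

open TopologicalSpace

theorem exists_isLeast_of_wellFoundedLT {α : Type*} [LinearOrder α] [WellFoundedLT α]
    {s : Set α} (hs : s.Nonempty) : ∃ a, IsLeast s a :=
  ⟨_, wellFounded_lt.min_mem s hs, fun _ hx => wellFounded_lt.min_le hx⟩

theorem SuccOrder.isOpen_Iic {α : Type*} [TopologicalSpace α] [LinearOrder α] [OrderTopology α]
    [SuccOrder α] (a : α) : IsOpen (Iic a) := by
  by_cases ha : IsMax a
  · rw [show Iic a = univ from eq_univ_of_forall fun b => ha.isTop b]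
    exact isOpen_univ
  · rw [← Order.Iio_succ_of_not_isMax ha]
    exact isOpen_Iio

/-- `T ∈ ⟨𝒢⟩`, for an arbitrary set `T`. -/
def VietorisMem {X : Type*} (T : Set X) (𝒢 : Set (Set X)) : Prop :=
  T ⊆ ⋃₀ 𝒢 ∧ ∀ G ∈ 𝒢, (T ∩ G).Nonempty

namespace NEClosed

variable {X : Type*} [TopologicalSpace X]

theorem basicSet_inter (𝒱 𝒲 : Set (Set X)) :
    basicSet 𝒱 ∩ basicSet 𝒲 = basicSet ((· ∩ ⋃₀ 𝒲) '' 𝒱 ∪ (· ∩ ⋃₀ 𝒱) '' 𝒲) := by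
  ext S
  constructor
  · rintro ⟨⟨hS𝒱, hm𝒱⟩, hS𝒲, hm𝒲⟩
    refine ⟨fun x hx => ?_, ?_⟩
    · obtain ⟨V, hV, hxV⟩ := hS𝒱 hx
      exact ⟨V ∩ ⋃₀ 𝒲, Or.inl ⟨V, hV, rfl⟩, hxV, hS𝒲 hx⟩
    · rintro _ (⟨V, hV, rfl⟩ | ⟨V, hV, rfl⟩)
      · obtain ⟨y, hyS, hyV⟩ := hm𝒱 V hV
        exact ⟨y, hyS, hyV, hS𝒲 hyS⟩
      · obtain ⟨y, hyS, hyV⟩ := hm𝒲 V hV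
        exact ⟨y, hyS, hyV, hS𝒱 hyS⟩
  · rintro ⟨hS, hm⟩
    refine ⟨⟨fun x hx => ?_, fun V hV => ?_⟩, fun x hx => ?_, fun V hV => ?_⟩
    · obtain ⟨_, ⟨V, hV, rfl⟩ | ⟨V, hV, rfl⟩, hxV⟩ := hS hx
      exacts [⟨V, hV, hxV.1⟩, hxV.2]
    · exact (hm _ (Or.inl ⟨V, hV, rfl⟩)).mono (inter_subset_inter_right _ inter_subset_left)
    · obtain ⟨_, ⟨V, hV, rfl⟩ | ⟨V, hV, rfl⟩, hxV⟩ := hS hx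
      exacts [hxV.2, ⟨V, hV, hxV.1⟩]
    · exact (hm _ (Or.inr ⟨V, hV, rfl⟩)).mono (inter_subset_inter_right _ inter_subset_left)

theorem isTopologicalBasis_basicSet :
    IsTopologicalBasis {t : Set (NEClosed X) | ∃ 𝒱 : Set (Set X), 𝒱.Finite ∧
      (∀ V ∈ 𝒱, IsOpen V) ∧ t = basicSet 𝒱} := by
  refine ⟨?_, ?_, rfl⟩
  · rintro _ ⟨𝒱, h𝒱f, h𝒱o, rfl⟩ _ ⟨𝒲, h𝒲f, h𝒲o, rfl⟩ S hS
    refine ⟨_, ⟨_, (h𝒱f.image _).union (h𝒲f.image _), ?_, rfl⟩,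
      basicSet_inter 𝒱 𝒲 ▸ hS, (basicSet_inter 𝒱 𝒲).ge⟩
    rintro _ (⟨V, hV, rfl⟩ | ⟨V, hV, rfl⟩)
    · exact (h𝒱o V hV).inter (isOpen_sUnion h𝒲o)
    · exact (h𝒲o V hV).inter (isOpen_sUnion h𝒱o)
  · refine sUnion_eq_univ_iff.2 fun S =>
      ⟨basicSet {univ}, ⟨{univ}, finite_singleton _, by simp, rfl⟩, ?_⟩
    simpa [basicSet] using S.nonempty'

theorem isOpen_basicSet {𝒱 : Set (Set X)} (h𝒱f : 𝒱.Finite) (h𝒱o : ∀ V ∈ 𝒱, IsOpen V) :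
    IsOpen (basicSet 𝒱) :=
  isOpen_generateFrom_of_mem ⟨𝒱, h𝒱f, h𝒱o, rfl⟩

theorem trace_mem_basicSet_iff (S : NEClosed X) {A : Set X} (h : (S.carrier ∩ A).Nonempty)
    (𝒢 : Set (Set X)) :
    S.trace A h ∈ basicSet ((((↑) : A → X) ⁻¹' ·) '' 𝒢) ↔
      VietorisMem (S.carrier ∩ A) 𝒢 := by
  constructor
  · rintro ⟨hcov, hmeet⟩
    refine ⟨fun x hx => ?_, fun G hG => ?_⟩
    · obtain ⟨_, ⟨G, hG, rfl⟩, hxG⟩ := hcov (a := ⟨x, hx.2⟩) hx.1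
      exact ⟨G, hG, hxG⟩
    · obtain ⟨⟨y, hyA⟩, hyS, hyG⟩ := hmeet _ ⟨G, hG, rfl⟩
      exact ⟨y, ⟨hyS, hyA⟩, hyG⟩
  · rintro ⟨hcov, hmeet⟩
    refine ⟨fun x hx => ?_, ?_⟩
    · obtain ⟨G, hG, hxG⟩ := hcov ⟨hx, x.2⟩
      exact ⟨_, ⟨G, hG, rfl⟩, hxG⟩
    · rintro _ ⟨G, hG, rfl⟩
      obtain ⟨y, ⟨hyS, hyA⟩, hyG⟩ := hmeet G hG
      exact ⟨⟨y, hyA⟩, hyS, hyG⟩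

theorem exists_basicSet_subset_of_isOpen {A : Set X} {U : Set (NEClosed A)} (hU : IsOpen U)
    {T : NEClosed A} (hT : T ∈ U) :
    ∃ 𝒢 : Set (Set X), 𝒢.Finite ∧ (∀ G ∈ 𝒢, IsOpen G) ∧
      T ∈ basicSet ((((↑) : A → X) ⁻¹' ·) '' 𝒢) ∧
      basicSet ((((↑) : A → X) ⁻¹' ·) '' 𝒢) ⊆ U := by
  obtain ⟨_, ⟨𝒲, h𝒲f, h𝒲o, rfl⟩, hT𝒲, h𝒲U⟩ :=
    isTopologicalBasis_basicSet.exists_subset_of_mem_open hT hU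
  choose! G hGo hGw using fun w (hw : w ∈ 𝒲) => isOpen_induced_iff.mp (h𝒲o w hw)
  have h𝒲 : (((↑) : A → X) ⁻¹' ·) '' (G '' 𝒲) = 𝒲 := by
    rw [image_image, image_congr hGw, image_id']
  exact ⟨G '' 𝒲, h𝒲f.image _, forall_mem_image.2 hGo, by rwa [h𝒲], by rwa [h𝒲]⟩

end NEClosed

section Gluing

variable {X : Type*} [TopologicalSpace X] {γ : Ordinal} {η : X → Iic γ}

theorem exists_isLeast_image (η : X → Iic γ) (S : NEClosed X) : ∃ μ, IsLeast (η '' S.carrier) μ :=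
  exists_isLeast_of_wellFoundedLT (S.nonempty'.image η)

theorem isOpen_preimage_singleton_of_not_isSuccLimit (hη : Continuous η) {μ : Iic γ}
    (hμ : ¬ Order.IsSuccLimit μ.val) : IsOpen (η ⁻¹' {μ}) := by
  have h : IsOpen (((↑) : Iic γ → Ordinal) ⁻¹' {μ.val}) :=
    (SuccOrder.isOpen_singleton_iff.2 hμ).preimage continuous_subtype_val
  rw [show ((↑) : Iic γ → Ordinal) ⁻¹' {μ.val} = {μ} by ext; simp [Subtype.ext_iff]] at h
  exact h.preimage hη

variable {f : NEClosed X → X} {W : Set X} {𝒢 : Set (Set X)} {μ : Iic γ}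

theorem apply_mem_of_subset_of_meets
    (hsel : ∀ S μ, IsLeast (η '' S.carrier) μ → f S ∈ S.carrier ∩ η ⁻¹' {μ})
    (h𝒢W : ∀ S, IsLeast (η '' S.carrier) μ → VietorisMem (S.carrier ∩ η ⁻¹' {μ}) 𝒢 → f S ∈ W)
    {E A : Set X} (hEF : E ⊆ η ⁻¹' {μ}) (hE𝒢 : E ⊆ ⋃₀ 𝒢) (hA : A ⊆ η ⁻¹' Iic μ)
    (hAW : A \ η ⁻¹' {μ} ⊆ W) (hA𝒢 : A ∩ η ⁻¹' {μ} ⊆ ⋃₀ 𝒢)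
    {S : NEClosed X} (hSU : S.carrier ⊆ η ⁻¹' Ioi μ ∪ E ∪ A) (hSA : (S.carrier ∩ A).Nonempty)
    (hSG : ∀ G ∈ 𝒢, ¬ A ∩ η ⁻¹' {μ} ⊆ G → (S.carrier ∩ (G ∩ E)).Nonempty) :
    f S ∈ W := by
  obtain ⟨μ', hμ'⟩ := exists_isLeast_image η S
  obtain ⟨a, haS, haA⟩ := hSA
  have hμ'μ : μ' ≤ μ := (hμ'.2 ⟨a, haS, rfl⟩).trans (hA haA)
  have hlow : ∀ x ∈ S.carrier, η x ≤ μ → x ∈ E ∪ A := by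
    intro x hx hxμ
    rcases hSU hx with (hgt | hE) | hA'
    · exact absurd hgt (not_lt.2 hxμ)
    · exact Or.inl hE
    · exact Or.inr hA'
  rcases hμ'μ.lt_or_eq with hlt | rfl
  · obtain ⟨hfS, hfμ'⟩ := hsel S μ' hμ'
    have hfμ : η (f S) < μ := hfμ' ▸ hlt
    rcases hlow _ hfS hfμ.le with hE | hA'
    · exact absurd (hEF hE) hfμ.ne
    · exact hAW ⟨hA', hfμ.ne⟩
  · refine h𝒢W S hμ' ⟨fun x hx => ?_, fun G hG => ?_⟩
    · rcases hlow x hx.1 (le_of_eq hx.2) with hE | hA'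
      · exact hE𝒢 hE
      · exact hA𝒢 ⟨hA', hx.2⟩
    · by_cases hAG : A ∩ η ⁻¹' {μ'} ⊆ G
      · have haF : η a = μ' := le_antisymm (hA haA) (hμ'.2 ⟨a, haS, rfl⟩)
        exact ⟨a, ⟨haS, haF⟩, hAG ⟨haA, haF⟩⟩
      · obtain ⟨y, hyS, hyG, hyE⟩ := hSG G hG hAG
        exact ⟨y, ⟨hyS, hEF hyE⟩, hyG⟩

theorem preimage_mem_nhds_of_subset_of_meets (hη : Continuous η)
    (hsel : ∀ S μ, IsLeast (η '' S.carrier) μ → f S ∈ S.carrier ∩ η ⁻¹' {μ})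
    (h𝒢W : ∀ S, IsLeast (η '' S.carrier) μ → VietorisMem (S.carrier ∩ η ⁻¹' {μ}) 𝒢 → f S ∈ W)
    (h𝒢f : 𝒢.Finite) (h𝒢o : ∀ G ∈ 𝒢, IsOpen G)
    {E A : Set X} (hEo : IsOpen E) (hAo : IsOpen A) (hEF : E ⊆ η ⁻¹' {μ}) (hE𝒢 : E ⊆ ⋃₀ 𝒢)
    (hA : A ⊆ η ⁻¹' Iic μ) (hAW : A \ η ⁻¹' {μ} ⊆ W) (hA𝒢 : A ∩ η ⁻¹' {μ} ⊆ ⋃₀ 𝒢)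
    {S : NEClosed X} (hS : IsLeast (η '' S.carrier) μ)
    (hSEA : S.carrier ∩ η ⁻¹' {μ} ⊆ E ∪ A) (hSA : (S.carrier ∩ A).Nonempty)
    (hSG : ∀ G ∈ 𝒢, ¬ A ∩ η ⁻¹' {μ} ⊆ G → (S.carrier ∩ (G ∩ E)).Nonempty) :
    f ⁻¹' W ∈ 𝓝 S := by
  set U := η ⁻¹' Ioi μ ∪ E ∪ A
  set 𝒱 := insert U (insert A ((· ∩ E) '' {G ∈ 𝒢 | ¬ A ∩ η ⁻¹' {μ} ⊆ G}))
  have h𝒱U : ⋃₀ 𝒱 ⊆ U := sUnion_subset <| by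
    rintro _ (rfl | rfl | ⟨G, -, rfl⟩)
    exacts [subset_rfl, subset_union_right,
      inter_subset_right.trans (subset_union_right.trans subset_union_left)]
  refine mem_nhds_iff.2 ⟨NEClosed.basicSet 𝒱, fun S' hS' => ?_,
    NEClosed.isOpen_basicSet ?_ ?_, ?_⟩
  · exact apply_mem_of_subset_of_meets hsel h𝒢W hEF hE𝒢 hA hAW hA𝒢 (hS'.1.trans h𝒱U)
      (hS'.2 A (mem_insert_of_mem _ (mem_insert _ _)))
      fun G hG hAG => hS'.2 _ (mem_insert_of_mem _ (mem_insert_of_mem _ ⟨G, ⟨hG, hAG⟩, rfl⟩))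
  · exact (((h𝒢f.subset (sep_subset _ _)).image _).insert _).insert _
  · rintro _ (rfl | rfl | ⟨G, hG, rfl⟩)
    · exact ((isOpen_Ioi.preimage hη).union hEo).union hAo
    · exact hAo
    · exact (h𝒢o G hG.1).inter hEo
  · refine ⟨fun x hx => ⟨U, mem_insert _ _, ?_⟩, ?_⟩
    · rcases (hS.2 ⟨x, hx, rfl⟩).lt_or_eq with hlt | heq
      · exact Or.inl (Or.inl hlt)
      · rcases hSEA ⟨hx, heq.symm⟩ with hE | hA'
        exacts [Or.inl (Or.inr hE), Or.inr hA']
    · rintro _ (rfl | rfl | ⟨G, ⟨hG, hAG⟩, rfl⟩)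
      · exact hSA.mono (inter_subset_inter_right _ subset_union_right)
      · exact hSA
      · exact hSG G hG hAG

theorem preimage_mem_nhds_of_subset_isOpen (hη : Continuous η)
    (hsel : ∀ S μ, IsLeast (η '' S.carrier) μ → f S ∈ S.carrier ∩ η ⁻¹' {μ})
    (h𝒢W : ∀ S, IsLeast (η '' S.carrier) μ → VietorisMem (S.carrier ∩ η ⁻¹' {μ}) 𝒢 → f S ∈ W)
    (h𝒢f : 𝒢.Finite) (h𝒢o : ∀ G ∈ 𝒢, IsOpen G)
    {S : NEClosed X} (hS : IsLeast (η '' S.carrier) μ)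
    (hS𝒢 : VietorisMem (S.carrier ∩ η ⁻¹' {μ}) 𝒢)
    {O : Set X} (hO : IsOpen O) (hOF : O ⊆ η ⁻¹' {μ}) (hSO : S.carrier ∩ η ⁻¹' {μ} ⊆ O) :
    f ⁻¹' W ∈ 𝓝 S := by
  have hE : O ∩ ⋃₀ 𝒢 ⊆ η ⁻¹' {μ} := inter_subset_left.trans hOF
  have hSE : S.carrier ∩ η ⁻¹' {μ} ⊆ O ∩ ⋃₀ 𝒢 := fun x hx => ⟨hSO hx, hS𝒢.1 hx⟩
  have hEo : IsOpen (O ∩ ⋃₀ 𝒢) := hO.inter (isOpen_sUnion h𝒢o)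
  refine preimage_mem_nhds_of_subset_of_meets hη hsel h𝒢W h𝒢f h𝒢o hEo hEo hE
    inter_subset_right (hE.trans fun x hx => le_of_eq hx)
    (by rw [sdiff_eq_empty.2 hE]; exact empty_subset _)
    (inter_subset_left.trans inter_subset_right) hS (fun x hx => Or.inl (hSE hx)) ?_ ?_
  · exact (show (S.carrier ∩ η ⁻¹' {μ}).Nonempty from hS.1).mono fun x hx => ⟨hx.1, hSE hx⟩
  · exact fun G hG _ => (hS𝒢.2 G hG).mono fun x hx => ⟨hx.1.1, hx.2, hSE hx.1⟩

theorem preimage_mem_nhds_of_mem_of_isOpen_diff_singleton (hη : Continuous η)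
    (hsel : ∀ S μ, IsLeast (η '' S.carrier) μ → f S ∈ S.carrier ∩ η ⁻¹' {μ})
    (h𝒢W : ∀ S, IsLeast (η '' S.carrier) μ → VietorisMem (S.carrier ∩ η ⁻¹' {μ}) 𝒢 → f S ∈ W)
    (h𝒢f : 𝒢.Finite) (h𝒢o : ∀ G ∈ 𝒢, IsOpen G) (hW : IsOpen W)
    {S : NEClosed X} (hS : IsLeast (η '' S.carrier) μ)
    (hS𝒢 : VietorisMem (S.carrier ∩ η ⁻¹' {μ}) 𝒢)
    {q : X} (hqS : q ∈ S.carrier) (hqμ : η q = μ) (hqW : q ∈ W)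
    (hFq : IsOpen (η ⁻¹' {μ} \ {q})) :
    f ⁻¹' W ∈ 𝓝 S := by
  set F := η ⁻¹' {μ}
  set K := ⋂₀ {G ∈ 𝒢 | q ∈ G}
  have hKo : IsOpen K := (h𝒢f.subset (sep_subset _ _)).isOpen_sInter fun G hG => h𝒢o G hG.1
  have hKG : ∀ G ∈ 𝒢, q ∈ G → K ⊆ G := fun G hG hqG => sInter_subset_of_mem ⟨hG, hqG⟩
  -- Near `q`, a set may dip below level `μ` (a limit), but only inside `W`; at level `μ` it
  -- stays in `K`, hence meets every member of `𝒢` that contains `q`.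
  set A := W ∩ η ⁻¹' Iic μ ∩ (Fᶜ ∪ K)
  have hAo : IsOpen A := (hW.inter ((SuccOrder.isOpen_Iic μ).preimage hη)).inter
    ((isClosed_singleton.preimage hη).isOpen_compl.union hKo)
  have hAFK : A ∩ F ⊆ K := fun x hx => hx.1.2.resolve_left (· hx.2)
  have hqA : q ∈ A := ⟨⟨hqW, le_of_eq hqμ⟩, Or.inr fun G hG => hG.2⟩
  obtain ⟨G₀, hG₀, hqG₀⟩ := hS𝒢.1 ⟨hqS, hqμ⟩
  refine preimage_mem_nhds_of_subset_of_meets hη hsel h𝒢W h𝒢f h𝒢o (E := (F \ {q}) ∩ ⋃₀ 𝒢)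
    (hFq.inter (isOpen_sUnion h𝒢o)) hAo (inter_subset_left.trans sdiff_subset)
    inter_subset_right (inter_subset_left.trans inter_subset_right) (fun x hx => hx.1.1.1)
    (hAFK.trans ((hKG G₀ hG₀ hqG₀).trans (subset_sUnion_of_mem hG₀))) hS ?_ ⟨q, hqS, hqA⟩ ?_
  · intro x hx
    by_cases hxq : x = q
    · exact Or.inr (hxq ▸ hqA)
    · exact Or.inl ⟨⟨hx.2, hxq⟩, hS𝒢.1 hx⟩
  · intro G hG hAG
    have hqG : q ∉ G := fun hqG => hAG (hAFK.trans (hKG G hG hqG))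
    obtain ⟨y, ⟨hyS, hyF⟩, hyG⟩ := hS𝒢.2 G hG
    exact ⟨y, hyS, hyG, ⟨hyF, fun hyq => hqG (hyq ▸ hyG)⟩, G, hG, hyG⟩

theorem exists_vietorisMem_of_continuous {g : NEClosed (η ⁻¹' {μ}) → η ⁻¹' {μ}}
    (hg : Continuous g)
    (hf : ∀ (S : NEClosed X) (hS : IsLeast (η '' S.carrier) μ), f S = g (S.trace _ hS.1))
    (hW : IsOpen W) {S : NEClosed X} (hS : IsLeast (η '' S.carrier) μ) (hSW : f S ∈ W) :
    ∃ 𝒢 : Set (Set X), 𝒢.Finite ∧ (∀ G ∈ 𝒢, IsOpen G) ∧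
      VietorisMem (S.carrier ∩ η ⁻¹' {μ}) 𝒢 ∧
      ∀ S', IsLeast (η '' S'.carrier) μ → VietorisMem (S'.carrier ∩ η ⁻¹' {μ}) 𝒢 → f S' ∈ W := by
  have hU : IsOpen (g ⁻¹' (((↑) : η ⁻¹' {μ} → X) ⁻¹' W)) :=
    (hW.preimage continuous_subtype_val).preimage hg
  rw [hf S hS] at hSW
  obtain ⟨𝒢, h𝒢f, h𝒢o, hS𝒢, h𝒢U⟩ := NEClosed.exists_basicSet_subset_of_isOpen hU hSW
  refine ⟨𝒢, h𝒢f, h𝒢o, (S.trace_mem_basicSet_iff _ _).1 hS𝒢, fun S' hS' hS'𝒢 => ?_⟩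
  rw [hf S' hS']
  exact h𝒢U ((S'.trace_mem_basicSet_iff _ _).2 hS'𝒢)

end Gluing

/-- Selections generated by a quasi-ordinal decomposition, using the min of the image:
if each limit fiber carries a point-maximal selection at the point modulo which the fiber is
clopen, the glued selection `f(S) = g_{min η(S)}(S ∩ η⁻¹(min η(S)))` is continuous. -/
theorem stmt_1 {X : Type u} [TopologicalSpace X] (γ : Ordinal.{u})
    (η : X → Set.Iic γ) (hη : IsQuasiOrdDecomp γ η)
    (g : (α : Set.Iic γ) → NEClosed (η ⁻¹' {α}) → (η ⁻¹' {α}))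
    (hg : ∀ α : Set.Iic γ, Continuous (g α) ∧ ∀ T, g α T ∈ T.carrier)
    (hmax : ∀ (l : Ordinal.{u}) (hl : l ≤ γ), Order.IsSuccLimit l →
      ∃ q : (η ⁻¹' {(⟨l, hl⟩ : Set.Iic γ)}),
        ClopenModulo (η ⁻¹' {(⟨l, hl⟩ : Set.Iic γ)}) (q : X) ∧
        PMaximal (g ⟨l, hl⟩) q)
    (f : NEClosed X → X)
    (hf : ∀ (S : NEClosed X) (μ : Set.Iic γ) (hμ : μ ∈ η '' S.carrier),
      (∀ α ∈ η '' S.carrier, μ ≤ α) →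
      f S = (g μ (S.trace (η ⁻¹' {μ})
        (by rcases hμ with ⟨x, hxS, hxμ⟩; exact ⟨x, hxS, hxμ⟩)) : X)) :
    IsVSelection f := by
  have hf' : ∀ (S : NEClosed X) (μ : Iic γ) (hS : IsLeast (η '' S.carrier) μ),
      f S = g μ (S.trace _ hS.1) :=
    fun S μ hS => hf S μ hS.1 hS.2
  have hsel : ∀ S μ, IsLeast (η '' S.carrier) μ → f S ∈ S.carrier ∩ η ⁻¹' {μ} := by
    intro S μ hS
    rw [hf' S μ hS]
    exact ⟨(hg μ).2 (S.trace _ hS.1), (g μ _).2⟩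
  refine ⟨continuous_def.2 fun W hW => isOpen_iff_mem_nhds.2 fun S hSW => ?_,
    fun S => (hsel S _ (exists_isLeast_image η S).choose_spec).1⟩
  obtain ⟨μ, hS⟩ := exists_isLeast_image η S
  obtain ⟨𝒢, h𝒢f, h𝒢o, hS𝒢, h𝒢W⟩ :=
    exists_vietorisMem_of_continuous (hg μ).1 (hf' · μ) hW hS hSW
  by_cases hlim : Order.IsSuccLimit μ.val
  · obtain ⟨q, hq, hqmax⟩ := hmax μ.val μ.2 hlim
    by_cases hqS : (q : X) ∈ S.carrier
    · have hfS : f S = q := by rw [hf' S μ hS, hqmax _ hqS]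
      exact preimage_mem_nhds_of_mem_of_isOpen_diff_singleton hη.1 hsel h𝒢W h𝒢f h𝒢o hW hS
        hS𝒢 hqS q.2 (hfS ▸ hSW) hq.2.2.2
    · exact preimage_mem_nhds_of_subset_isOpen hη.1 hsel h𝒢W h𝒢f h𝒢o hS hS𝒢 hq.2.2.2
        sdiff_subset fun x hx => ⟨hx.2, fun hxq => hqS (hxq ▸ hx.1)⟩
  · exact preimage_mem_nhds_of_subset_isOpen hη.1 hsel h𝒢W h𝒢f h𝒢o hS hS𝒢
      (isOpen_preimage_singleton_of_not_isSuccLimit hη.1 hlim) subset_rfl inter_subset_right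
end

section
/- Let p ∈ X be a non-isolated point and let η : X → [0,γ] be a map with all fibers in Δ(X) and with η⁻¹(β) = {p} for some β ≤ γ. (i) If η is a quasi-ordinal decomposition of X, then the singleton {p} is an intersection of a family of clopen subsets of X of cardinality at most the cardinality of [0,γ]. (ii) If η is an ordinal decomposition of X, then p has a neighbourhood base of clopen subsets of X of cardinality at most the cardinality of [0,γ]. -/
open Set Topology Filter

universe u v

/-!
In a successor order with the order topology every ray `(a, ∞)` is closed, being `[succ a, ∞)`,
so the sets `(a, b]` for `a < b`, together with `(-∞, b]`, form a family of clopen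
neighbourhoods of `b`, indexed by the space itself, whose intersection is `{b}` and which is a
neighbourhood base at `b`. Pulling this family back along `η`, whose fibre over `β` is `{p}`,
gives clopen sets with intersection `{p}`; if `η` is moreover closed, every neighbourhood of the
fibre `{p}` contains the preimage of a neighbourhood of `β`, so the pullback is a
neighbourhood base at `p`.
-/

section ClopenNhdLeft

variable {α : Type*} [LinearOrder α]

def clopenNhdLeft (b a : α) : Set α :=
  if a < b then Ioc a b else Iic b

theorem mem_clopenNhdLeft_self (b a : α) : b ∈ clopenNhdLeft b a := by
  unfold clopenNhdLeft
  split_ifs with h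
  · exact ⟨h, le_rfl⟩
  · exact le_rfl

theorem iInter_clopenNhdLeft (b : α) : ⋂ a, clopenNhdLeft b a = {b} := by
  refine Subset.antisymm (fun x hx ↦ ?_) (singleton_subset_iff.mpr
    (mem_iInter.mpr (mem_clopenNhdLeft_self b)))
  have hxb : x ≤ b := by simpa [clopenNhdLeft] using mem_iInter.mp hx b
  rcases hxb.lt_or_eq with hlt | heq
  · have := mem_iInter.mp hx x
    simp [clopenNhdLeft, hlt] at this
  · exact heq

theorem isClopen_Ioi_of_succOrder [TopologicalSpace α] [OrderTopology α] [SuccOrder α]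
    (a : α) : IsClopen (Ioi a) := by
  refine ⟨?_, isOpen_Ioi⟩
  by_cases ha : IsMax a
  · rw [ha.Ioi_eq]
    exact isClosed_empty
  · rw [← Order.Ici_succ_of_not_isMax ha]
    exact isClosed_Ici

theorem isClopen_Iic_of_succOrder [TopologicalSpace α] [OrderTopology α] [SuccOrder α]
    (a : α) : IsClopen (Iic a) := by
  simpa only [compl_Ioi] using (isClopen_Ioi_of_succOrder a).compl

theorem isClopen_clopenNhdLeft [TopologicalSpace α] [OrderTopology α] [SuccOrder α]
    (b a : α) : IsClopen (clopenNhdLeft b a) := by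
  unfold clopenNhdLeft
  split_ifs
  · rw [← Ioi_inter_Iic]
    exact (isClopen_Ioi_of_succOrder a).inter (isClopen_Iic_of_succOrder b)
  · exact isClopen_Iic_of_succOrder b

theorem exists_clopenNhdLeft_subset [TopologicalSpace α] [OrderTopology α] {b : α} {U : Set α}
    (hU : U ∈ 𝓝 b) : ∃ a, clopenNhdLeft b a ⊆ U := by
  by_cases hb : IsMin b
  · refine ⟨b, ?_⟩
    rw [clopenNhdLeft, if_neg (lt_irrefl b), hb.Iic_eq, singleton_subset_iff]
    exact mem_of_mem_nhds hU
  · obtain ⟨l, hl⟩ := not_isMin_iff.mp hb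
    obtain ⟨a, ha, hsub⟩ := exists_Ioc_subset_of_mem_nhds hU ⟨l, hl⟩
    exact ⟨a, by rwa [clopenNhdLeft, if_pos ha]⟩

end ClopenNhdLeft

theorem IsClosedMap.exists_preimage_subset_of_fiber_eq_singleton {X Y : Type*}
    [TopologicalSpace X] [TopologicalSpace Y] {f : X → Y} (hf : IsClosedMap f) {y : Y} {x : X}
    (hfib : f ⁻¹' {y} = {x}) {V : Set X} (hV : V ∈ 𝓝 x) : ∃ U ∈ 𝓝 y, f ⁻¹' U ⊆ V := by
  have : comap f (𝓝 y) ≤ 𝓝 x := by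
    simpa only [hfib, nhdsSet_singleton] using isClosedMap_iff_comap_nhds_le.mp hf (y := y)
  exact mem_comap.mp (this hV)

theorem stmt_2_general {X : Type u} [TopologicalSpace X] (γ : Ordinal.{u}) (p : X)
    (η : X → Set.Iic γ)
    (β : Set.Iic γ) (hβ : η ⁻¹' {β} = {p}) :
    (IsQuasiOrdDecomp γ η →
      ∃ 𝒞 : Set (Set X), (∀ C ∈ 𝒞, IsClopen C) ∧ ⋂₀ 𝒞 = {p} ∧
        Cardinal.lift.{u + 1} (Cardinal.mk ↥𝒞) ≤ Cardinal.lift.{u} (Cardinal.mk ↥(Set.Iic γ))) ∧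
    (IsOrdDecomp γ η →
      ∃ ℬ : Set (Set X), (∀ B ∈ ℬ, IsClopen B ∧ p ∈ B) ∧
        (∀ V : Set X, IsOpen V → p ∈ V → ∃ B ∈ ℬ, B ⊆ V) ∧
        Cardinal.lift.{u + 1} (Cardinal.mk ↥ℬ) ≤ Cardinal.lift.{u} (Cardinal.mk ↥(Set.Iic γ))) := by
  have hpβ : η p = β := by simpa using hβ.ge rfl
  set 𝒞 := range fun a ↦ η ⁻¹' clopenNhdLeft β a
  have hcard : Cardinal.lift.{u + 1} (Cardinal.mk ↥𝒞) ≤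
      Cardinal.lift.{u} (Cardinal.mk ↥(Set.Iic γ)) := Cardinal.mk_range_le_lift
  refine ⟨fun hη ↦ ⟨𝒞, ?_, ?_, hcard⟩, fun hη ↦ ⟨𝒞, ?_, ?_, hcard⟩⟩
  · rintro - ⟨a, rfl⟩
    exact (isClopen_clopenNhdLeft β a).preimage hη.1
  · rw [sInter_range, ← preimage_iInter, iInter_clopenNhdLeft, hβ]
  · rintro - ⟨a, rfl⟩
    exact ⟨(isClopen_clopenNhdLeft β a).preimage hη.1.continuous,
      hpβ ▸ mem_clopenNhdLeft_self (η p) a⟩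
  · intro V hV hpV
    obtain ⟨U, hU, hUV⟩ :=
      hη.2.1.exists_preimage_subset_of_fiber_eq_singleton hβ (hV.mem_nhds hpV)
    obtain ⟨a, ha⟩ := exists_clopenNhdLeft_subset hU
    exact ⟨_, ⟨a, rfl⟩, (preimage_mono ha).trans hUV⟩

/-- If `p` is a non-isolated point and a (quasi-)ordinal decomposition of `X` has `{p}` as a
fiber, then: for a quasi-ordinal decomposition, `{p}` is an intersection of at most `|[0,γ]|`
many clopen sets; for an ordinal decomposition, `p` has a clopen neighbourhood base of
cardinality at most `|[0,γ]|`. -/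
theorem stmt_2 {X : Type u} [TopologicalSpace X] [T2Space X] (γ : Ordinal.{u}) (p : X)
    (hp : ¬ IsOpen ({p} : Set X))
    (η : X → Set.Iic γ) (hfib : ∀ α : Set.Iic γ, η ⁻¹' {α} ∈ DeltaSet X)
    (β : Set.Iic γ) (hβ : η ⁻¹' {β} = {p}) :
    (IsQuasiOrdDecomp γ η →
      ∃ 𝒞 : Set (Set X), (∀ C ∈ 𝒞, IsClopen C) ∧ ⋂₀ 𝒞 = {p} ∧
        Cardinal.lift.{u + 1} (Cardinal.mk ↥𝒞) ≤ Cardinal.lift.{u} (Cardinal.mk ↥(Set.Iic γ))) ∧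
    (IsOrdDecomp γ η →
      ∃ ℬ : Set (Set X), (∀ B ∈ ℬ, IsClopen B ∧ p ∈ B) ∧
        (∀ V : Set X, IsOpen V → p ∈ V → ∃ B ∈ ℬ, B ⊆ V) ∧
        Cardinal.lift.{u + 1} (Cardinal.mk ↥ℬ) ≤ Cardinal.lift.{u} (Cardinal.mk ↥(Set.Iic γ))) :=
  stmt_2_general γ p η β hβ
end

section
/- Let p ∈ X be a non-isolated point. (i) If the singleton {p} is the intersection of countably many clopen subsets of X, then there exists a quasi-ordinal decomposition η : X → [0,ω] of X with η⁻¹(ω) = {p}. (ii) If p has a countable neighbourhood base consisting of clopen subsets of X, then there exists an ordinal decomposition η : X → [0,ω] of X with η⁻¹(ω) = {p}. -/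
open Set Topology Filter

universe u v

section Stmt3Aux
instance : Nontrivial (Set.Iic (Ordinal.omega0.{u})) :=
  ⟨⟨(0:Ordinal), Set.mem_Iic.mpr (Ordinal.nat_lt_omega0 0).le⟩,
   ⟨Ordinal.omega0, Set.mem_Iic.mpr le_rfl⟩,
    fun h => (Ordinal.omega0_ne_zero) (congrArg Subtype.val h).symm⟩


lemma isOpen_nat_singleton (n : ℕ) :
    IsOpen ({⟨(n:Ordinal.{u}), Set.mem_Iic.mpr (Ordinal.nat_lt_omega0 n).le⟩} :
      Set (Set.Iic Ordinal.omega0.{u})) := by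
  cases n with
  | zero =>
    have h : ({⟨((0:ℕ):Ordinal.{u}), Set.mem_Iic.mpr (Ordinal.nat_lt_omega0 0).le⟩} :
        Set (Set.Iic Ordinal.omega0.{u}))
        = Set.Iio ⟨((1:ℕ):Ordinal), Set.mem_Iic.mpr (Ordinal.nat_lt_omega0 1).le⟩ := by
      ext x
      simp only [Set.mem_singleton_iff, Set.mem_Iio, ← Subtype.coe_lt_coe, Subtype.ext_iff]
      push_cast
      rw [Ordinal.lt_one_iff_zero]
    rw [h]; exact isOpen_Iio
  | succ n =>
    have h : ({⟨((n+1:ℕ):Ordinal.{u}), Set.mem_Iic.mpr (Ordinal.nat_lt_omega0 _).le⟩} :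
        Set (Set.Iic Ordinal.omega0.{u}))
        = Set.Ioo ⟨((n:ℕ):Ordinal), Set.mem_Iic.mpr (Ordinal.nat_lt_omega0 n).le⟩
            ⟨((n+2:ℕ):Ordinal), Set.mem_Iic.mpr (Ordinal.nat_lt_omega0 _).le⟩ := by
      ext x
      simp only [Set.mem_singleton_iff, Set.mem_Ioo, ← Subtype.coe_lt_coe, Subtype.ext_iff]
      constructor
      · intro hx
        rw [hx]
        constructor
        · exact_mod_cast Nat.lt_succ_self n
        · exact_mod_cast Nat.lt_succ_self (n+1)
      · rintro ⟨h1, h2⟩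
        obtain ⟨m, hm⟩ := Ordinal.lt_omega0.mp (h2.trans (Ordinal.nat_lt_omega0 _))
        rw [hm] at h1 h2 ⊢
        have h1' : n < m := by exact_mod_cast h1
        have h2' : m < n + 2 := by exact_mod_cast h2
        congr 1
        omega
    rw [h]; exact isOpen_Ioo

lemma clopen_mem_delta {X : Type u} [TopologicalSpace X] [T1Space X] {H : Set X}
    (h : IsClopen H) (hne : H.Nonempty) : H ∈ DeltaSet X := by
  obtain ⟨q, hq⟩ := hne
  refine ⟨q, ⟨q, hq⟩, h.1, hq, ?_⟩
  rw [Set.diff_eq]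
  exact h.2.inter isOpen_compl_singleton


lemma key {X : Type u} [TopologicalSpace X] [T2Space X] (p : X)
    (E : ℕ → Set X) (hcl : ∀ k, IsClopen (E k)) (hpE : ∀ k, p ∈ E k)
    (hdec : ∀ k, E (k + 1) ⊆ E k) (hne : ∀ k, (E k \ E (k + 1)).Nonempty)
    (h0 : (E 0)ᶜ.Nonempty) (hint : (⋂ k, E k) = {p}) :
    ∃ η : X → Set.Iic (Ordinal.omega0.{u}),
      Continuous η ∧ Function.Surjective η ∧ (∀ α, η ⁻¹' {α} ∈ DeltaSet X) ∧
      η ⁻¹' {⟨Ordinal.omega0, Set.mem_Iic.mpr le_rfl⟩} = {p} ∧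
      ((∀ V : Set X, IsOpen V → p ∈ V → ∃ n, E n ⊆ V) → IsClosedMap η) := by
  classical
  have hanti : ∀ {j k : ℕ}, j ≤ k → E k ⊆ E j := fun {j k} h =>
    antitone_nat_of_succ_le (fun n => hdec n) h
  set ωc : Set.Iic Ordinal.omega0.{u} := ⟨Ordinal.omega0, Set.mem_Iic.mpr le_rfl⟩ with hωc
  set c : ℕ → Set.Iic Ordinal.omega0.{u} :=
    fun n => ⟨(n : Ordinal), Set.mem_Iic.mpr (Ordinal.nat_lt_omega0 n).le⟩ with hc
  have hcne : ∀ n, c n ≠ ωc := fun n h =>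
    (Ordinal.nat_lt_omega0 n).ne (congrArg Subtype.val h)
  have hcinj : ∀ {m n : ℕ}, c m = c n → m = n := by
    intro m n h
    have h2 : ((m : ℕ) : Ordinal.{u}) = ((n : ℕ) : Ordinal) := congrArg Subtype.val h
    exact_mod_cast h2
  have hcases : ∀ α : Set.Iic Ordinal.omega0.{u}, α = ωc ∨ ∃ n, α = c n := by
    intro α
    rcases lt_or_eq_of_le (Set.mem_Iic.mp α.2) with h | h
    · obtain ⟨n, hn⟩ := Ordinal.lt_omega0.mp h
      exact Or.inr ⟨n, Subtype.ext hn⟩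
    · exact Or.inl (Subtype.ext h)
  -- the map
  set η : X → Set.Iic Ordinal.omega0.{u} :=
    fun x => if h : ∃ k, x ∉ E k then c (Nat.find h) else ωc with hη
  -- fibers over naturals
  set F : ℕ → Set X := fun k => Nat.casesOn k (E 0)ᶜ (fun j => E j \ E (j + 1)) with hF
  have hηmemF : ∀ x k, η x = c k ↔ x ∈ F k := by
    intro x k
    by_cases h : ∃ k, x ∉ E k
    · simp only [hη, dif_pos h]
      constructor
      · intro hfk
        have hfind : Nat.find h = k := hcinj hfk
        have h1 : x ∉ E k := hfind ▸ Nat.find_spec h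
        cases k with
        | zero => exact h1
        | succ j =>
          have h2 : x ∈ E j := by
            by_contra hxj
            have hle : Nat.find h ≤ j := Nat.find_le hxj
            omega
          show x ∈ E j \ E (j + 1)
          exact ⟨h2, h1⟩
      · intro hxF
        have : Nat.find h = k := by
          cases k with
          | zero =>
            exact Nat.le_zero.mp (Nat.find_le hxF)
          | succ j =>
            have hub : Nat.find h ≤ j + 1 := Nat.find_le hxF.2
            have hlb : ¬ Nat.find h ≤ j := by
              intro hle
              exact (Nat.find_spec h) (hanti hle hxF.1)
            omega
        rw [this]
    · simp only [hη, dif_neg h]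
      push_neg at h
      constructor
      · intro habs; exact absurd habs.symm (hcne k)
      · intro hxF
        exfalso
        cases k with
        | zero => exact hxF (h 0)
        | succ j => exact hxF.2 (h (j + 1))
  have hfib : ∀ k, η ⁻¹' {c k} = F k := by
    intro k; ext x; simp only [Set.mem_preimage, Set.mem_singleton_iff]; exact hηmemF x k
  have hηω : ∀ x, η x = ωc ↔ ∀ k, x ∈ E k := by
    intro x
    by_cases h : ∃ k, x ∉ E k
    · simp only [hη, dif_pos h]
      constructor
      · intro habs; exact absurd habs (hcne _)
      · intro hall; exact absurd (hall (Nat.find h)) (Nat.find_spec h)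
    · simp only [hη, dif_neg h]
      push_neg at h
      simp only [eq_self_iff_true, true_iff]
      exact h
  have hfibω : η ⁻¹' {ωc} = {p} := by
    ext x
    simp only [Set.mem_preimage, Set.mem_singleton_iff, hηω]
    rw [← Set.mem_iInter (s := E), hint, Set.mem_singleton_iff]
  have hFclopen : ∀ k, IsClopen (F k) := by
    intro k
    cases k with
    | zero => exact (hcl 0).compl
    | succ j => exact (hcl j).diff (hcl (j+1))
  have hFne : ∀ k, (F k).Nonempty := by
    intro k
    cases k with
    | zero => exact h0
    | succ j => exact hne j
  have hηp : η p = ωc := (hηω p).mpr hpE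
  -- continuity
  have hcont : Continuous η := by
    rw [continuous_iff_continuousAt]
    intro x
    by_cases h : ∃ k, x ∉ E k
    · have hx : η x = c (Nat.find h) := by simp only [hη, dif_pos h]
      have hmem : x ∈ F (Nat.find h) := (hηmemF x _).mp hx
      refine Filter.EventuallyEq.continuousAt (y := c (Nat.find h)) ?_
      filter_upwards [(hFclopen (Nat.find h)).2.mem_nhds hmem] with y hy
      exact (hηmemF y _).mpr hy
    · push_neg at h
      have hxp : x = p := by
        have : x ∈ ⋂ k, E k := Set.mem_iInter.mpr h
        rwa [hint, Set.mem_singleton_iff] at this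
      subst hxp
      unfold ContinuousAt
      rw [hηp]
      have htop : ωc = (⊤ : Set.Iic Ordinal.omega0.{u}) := rfl
      rw [htop, (nhds_top_basis).tendsto_right_iff]
      rintro ⟨a, ha⟩ hlt
      have halt : a < Ordinal.omega0 := hlt
      obtain ⟨n, hn⟩ := Ordinal.lt_omega0.mp halt
      filter_upwards [(hcl n).2.mem_nhds (hpE n)] with y hy
      show (⟨a, ha⟩ : Set.Iic Ordinal.omega0.{u}) < η y
      by_cases hky : ∃ k, y ∉ E k
      · have : η y = c (Nat.find hky) := by simp only [hη, dif_pos hky]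
        rw [this]
        have hfd : n < Nat.find hky := by
          by_contra hle
          push_neg at hle
          exact (Nat.find_spec hky) (hanti hle hy)
        show a < ((Nat.find hky : ℕ) : Ordinal)
        rw [hn]
        exact_mod_cast hfd
      · have : η y = ωc := by simp only [hη, dif_neg hky]
        rw [this]
        exact hlt
  -- surjectivity
  have hsurj : Function.Surjective η := by
    intro α
    rcases hcases α with rfl | ⟨n, rfl⟩
    · exact ⟨p, hηp⟩
    · obtain ⟨x, hx⟩ := hFne n
      exact ⟨x, (hηmemF x n).mpr hx⟩
  -- fibers in DeltaSet
  have hdelta : ∀ α, η ⁻¹' {α} ∈ DeltaSet X := by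
    intro α
    rcases hcases α with rfl | ⟨n, rfl⟩
    · rw [hfibω]
      exact ⟨p, ⟨p, rfl⟩, isClosed_singleton, rfl, by simp⟩
    · rw [hfib]
      exact clopen_mem_delta (hFclopen n) (hFne n)
  refine ⟨η, hcont, hsurj, hdelta, hfibω, ?_⟩
  -- closed map
  intro hbasis S hS
  by_cases hpS : p ∈ S
  · rw [← isOpen_compl_iff]
    rw [isOpen_iff_forall_mem_open]
    intro α hα
    rcases hcases α with rfl | ⟨n, rfl⟩
    · exact absurd ⟨p, hpS, hηp⟩ hα
    · exact ⟨{c n}, by simpa using hα, isOpen_nat_singleton n, rfl⟩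
  · obtain ⟨n, hn⟩ := hbasis Sᶜ hS.isOpen_compl (by simpa using hpS)
    have hsub : η '' S ⊆ c '' {k : ℕ | k ≤ n} := by
      rintro _ ⟨x, hxS, rfl⟩
      have hxE : x ∉ E n := fun hx => (hn hx) hxS
      have hex : ∃ k, x ∉ E k := ⟨n, hxE⟩
      refine ⟨Nat.find hex, Nat.find_le hxE, ?_⟩
      simp only [hη, dif_pos hex]
    exact Set.Finite.isClosed (((Set.finite_Iic n).image c).subset hsub)

lemma buildE {X : Type u} [TopologicalSpace X] [T2Space X] {p : X}
    (hp : ¬ IsOpen ({p} : Set X)) (C : ℕ → Set X) (hC : ∀ n, IsClopen (C n))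
    (hpC : ∀ n, p ∈ C n) (hint : (⋂ n, C n) = {p}) :
    ∃ E : ℕ → Set X, (∀ k, IsClopen (E k)) ∧ (∀ k, p ∈ E k) ∧ (∀ k, E (k+1) ⊆ E k) ∧
      (∀ k, (E k \ E (k+1)).Nonempty) ∧ (E 0)ᶜ.Nonempty ∧ ((⋂ k, E k) = {p}) ∧
      (∀ k, E k ⊆ C k) := by
  classical
  set D : ℕ → Set X := fun n => ⋂ i ∈ Finset.range (n+1), C i with hD
  have hDclopen : ∀ n, IsClopen (D n) := fun n =>
    Set.Finite.isClopen_biInter (Finset.range (n+1)).finite_toSet (fun i _ => hC i)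
  have hpD : ∀ n, p ∈ D n := fun n => Set.mem_iInter₂.mpr (fun i _ => hpC i)
  have hDanti : ∀ {m n : ℕ}, m ≤ n → D n ⊆ D m := by
    intro m n hmn x hx
    refine Set.mem_iInter₂.mpr (fun i hi => Set.mem_iInter₂.mp hx i ?_)
    simp only [Finset.mem_range] at hi ⊢
    omega
  have hDsub : ∀ n, D n ⊆ C n := fun n x hx =>
    Set.mem_iInter₂.mp hx n (by simp)
  have hDint : (⋂ n, D n) = {p} := by
    apply Set.Subset.antisymm
    · intro x hx
      rw [← hint]
      exact Set.mem_iInter.mpr fun n => hDsub n (Set.mem_iInter.mp hx n)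
    · intro x hx
      rw [Set.mem_singleton_iff] at hx; subst hx
      exact Set.mem_iInter.mpr hpD
  have step : ∀ n, ∃ m, n < m ∧ (D n \ D m).Nonempty := by
    intro n
    have hDne : D n ≠ {p} := fun heq => hp (heq ▸ (hDclopen n).2)
    have hex : ∃ x ∈ D n, x ≠ p := by
      by_contra hcon
      push_neg at hcon
      refine hDne (Set.Subset.antisymm (fun x hx => hcon x hx) ?_)
      intro x hx
      rw [Set.mem_singleton_iff] at hx; subst hx
      exact hpD n
    obtain ⟨x, hxD, hxp⟩ := hex
    have hnx : x ∉ ⋂ k, D k := by rw [hDint]; simpa using hxp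
    obtain ⟨m', hm'⟩ : ∃ m', x ∉ D m' := by
      by_contra hcon; push_neg at hcon; exact hnx (Set.mem_iInter.mpr hcon)
    refine ⟨max (n+1) m', lt_of_lt_of_le (Nat.lt_succ_self n) (le_max_left _ _),
      ⟨x, hxD, fun hx => hm' (hDanti (le_max_right _ _) hx)⟩⟩
  choose f hf1 hf2 using step
  set g : ℕ → ℕ := fun k => f^[k+1] 0 with hg
  have hgsucc : ∀ k, g (k+1) = f (g k) := fun k => Function.iterate_succ_apply' f (k+1) 0
  have hgk : ∀ k, k < g k := by
    intro k
    induction k with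
    | zero => exact Nat.lt_of_lt_of_le (hf1 0) (by simp [hg])
    | succ k ih =>
      have := hf1 (g k)
      rw [← hgsucc k] at this
      omega
  refine ⟨fun k => D (g k), fun k => hDclopen _, fun k => hpD _, ?_, ?_, ?_, ?_, ?_⟩
  · intro k
    show D (g (k+1)) ⊆ D (g k)
    rw [hgsucc k]
    exact hDanti (hf1 (g k)).le
  · intro k
    show (D (g k) \ D (g (k+1))).Nonempty
    rw [hgsucc k]
    exact hf2 (g k)
  · obtain ⟨x, _, hx2⟩ := hf2 0
    refine ⟨x, ?_⟩
    simpa [hg] using hx2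
  · apply Set.Subset.antisymm
    · intro x hx
      rw [← hDint]
      exact Set.mem_iInter.mpr fun n => hDanti (hgk n).le (Set.mem_iInter.mp hx n)
    · intro x hx
      rw [Set.mem_singleton_iff] at hx; subst hx
      exact Set.mem_iInter.mpr fun k => hpD _
  · exact fun k => (hDanti (hgk k).le).trans (hDsub k)

end Stmt3Aux

/-- If `p` is non-isolated and `{p}` is a countable intersection of clopen sets, then `X` has a
quasi-ordinal decomposition `η : X → [0,ω]` with `η⁻¹(ω) = {p}`; if moreover `p` has a countable
clopen neighbourhood base, then `X` has such an ordinal decomposition. -/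
theorem stmt_3 {X : Type u} [TopologicalSpace X] [T2Space X] (p : X)
    (hp : ¬ IsOpen ({p} : Set X)) :
    ((∃ C : ℕ → Set X, (∀ n, IsClopen (C n)) ∧ (⋂ n, C n) = {p}) →
      ∃ η : X → Set.Iic (Ordinal.omega0.{u}), IsQuasiOrdDecomp Ordinal.omega0 η ∧
        η ⁻¹' {(⟨Ordinal.omega0, Set.mem_Iic.mpr le_rfl⟩ : Set.Iic Ordinal.omega0)} = {p}) ∧
    ((∃ B : ℕ → Set X, (∀ n, IsClopen (B n) ∧ p ∈ B n) ∧
        (∀ V : Set X, IsOpen V → p ∈ V → ∃ n, B n ⊆ V)) →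
      ∃ η : X → Set.Iic (Ordinal.omega0.{u}), IsOrdDecomp Ordinal.omega0 η ∧
        η ⁻¹' {(⟨Ordinal.omega0, Set.mem_Iic.mpr le_rfl⟩ : Set.Iic Ordinal.omega0)} = {p}) := by
  constructor
  · rintro ⟨C, hC, hint⟩
    have hpC : ∀ n, p ∈ C n := fun n => by
      have hmem : p ∈ ⋂ n, C n := by rw [hint]; exact Set.mem_singleton p
      exact Set.mem_iInter.mp hmem n
    obtain ⟨E, h1, h2, h3, h4, h5, h6, h7⟩ := buildE hp C hC hpC hint
    obtain ⟨η, hcont, hsurj, hdelta, hfibω, -⟩ := key p E h1 h2 h3 h4 h5 h6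
    exact ⟨η, ⟨hcont, hsurj, hdelta⟩, hfibω⟩
  · rintro ⟨B, hB, hbasis⟩
    have hint : (⋂ n, B n) = {p} := by
      apply Set.Subset.antisymm
      · intro x hx
        rw [Set.mem_singleton_iff]
        by_contra hxp
        obtain ⟨n, hn⟩ := hbasis {x}ᶜ isOpen_compl_singleton
          (Set.mem_compl_singleton_iff.mpr (Ne.symm hxp))
        exact hn (Set.mem_iInter.mp hx n) rfl
      · intro x hx
        rw [Set.mem_singleton_iff] at hx; subst hx
        exact Set.mem_iInter.mpr fun n => (hB n).2
    obtain ⟨E, h1, h2, h3, h4, h5, h6, h7⟩ :=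
      buildE hp B (fun n => (hB n).1) (fun n => (hB n).2) hint
    obtain ⟨η, hcont, hsurj, hdelta, hfibω, hclosed⟩ := key p E h1 h2 h3 h4 h5 h6
    have hcm : IsClosedMap η := hclosed (fun V hV hpV => by
      obtain ⟨n, hn⟩ := hbasis V hV hpV
      exact ⟨n, (h7 n).trans hn⟩)
    exact ⟨η, ⟨hcm.isQuotientMap hcont hsurj, hcm, hdelta⟩, hfibω⟩
end

section
/- Let X be a Hausdorff space admitting a continuous selection for 𝓕(X), and let p ∈ X be a point which has a countable neighbourhood base consisting of clopen subsets of X. Then 𝓕(X) admits a p-maximal continuous selection. -/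
open Set Topology Filter

universe u v

section Stmt4Aux

open TopologicalSpace

variable {X : Type u} [TopologicalSpace X]

/-- The collection of Vietoris basic sets is a topological basis. -/
theorem vietoris_basis :
    IsTopologicalBasis {t : Set (NEClosed X) | ∃ 𝒱 : Set (Set X), 𝒱.Finite ∧
      (∀ V ∈ 𝒱, IsOpen V) ∧ t = NEClosed.basicSet 𝒱} := by
  refine ⟨?_, ?_, rfl⟩
  · rintro t₁ ⟨𝒱, h𝒱f, h𝒱o, rfl⟩ t₂ ⟨𝒲, h𝒲f, h𝒲o, rfl⟩ S ⟨⟨hS1, hS2⟩, ⟨hS3, hS4⟩⟩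
    refine ⟨NEClosed.basicSet ((fun V => V ∩ ⋃₀ 𝒲) '' 𝒱 ∪ (fun W => W ∩ ⋃₀ 𝒱) '' 𝒲),
      ⟨_, (h𝒱f.image _).union (h𝒲f.image _), ?_, rfl⟩, ⟨?_, ?_⟩, ?_⟩
    · rintro V (⟨V, hV, rfl⟩ | ⟨W, hW, rfl⟩)
      · exact (h𝒱o V hV).inter (isOpen_sUnion fun W hW => h𝒲o W hW)
      · exact (h𝒲o W hW).inter (isOpen_sUnion fun V hV => h𝒱o V hV)
    · intro x hx
      obtain ⟨V, hV, hxV⟩ := hS1 hx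
      exact ⟨V ∩ ⋃₀ 𝒲, Or.inl ⟨V, hV, rfl⟩, hxV, hS3 hx⟩
    · rintro U (⟨V, hV, rfl⟩ | ⟨W, hW, rfl⟩)
      · obtain ⟨x, hxS, hxV⟩ := hS2 V hV
        exact ⟨x, hxS, hxV, hS3 hxS⟩
      · obtain ⟨x, hxS, hxW⟩ := hS4 W hW
        exact ⟨x, hxS, hxW, hS1 hxS⟩
    · rintro S' ⟨h1, h2⟩
      refine ⟨⟨?_, ?_⟩, ?_, ?_⟩
      · intro x hx
        rcases h1 hx with ⟨U, (⟨V, hV, rfl⟩ | ⟨W, hW, rfl⟩), hxU⟩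
        · exact ⟨V, hV, hxU.1⟩
        · exact hxU.2
      · intro V hV
        exact (h2 _ (Or.inl ⟨V, hV, rfl⟩)).mono fun x hx => ⟨hx.1, hx.2.1⟩
      · intro x hx
        rcases h1 hx with ⟨U, (⟨V, hV, rfl⟩ | ⟨W, hW, rfl⟩), hxU⟩
        · exact hxU.2
        · exact ⟨W, hW, hxU.1⟩
      · intro W hW
        exact (h2 _ (Or.inr ⟨W, hW, rfl⟩)).mono fun x hx => ⟨hx.1, hx.2.1⟩
  · apply eq_univ_of_forall
    intro S
    refine ⟨NEClosed.basicSet {univ}, ⟨{univ}, finite_singleton _, ?_, rfl⟩, ?_, ?_⟩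
    · rintro V rfl; exact isOpen_univ
    · intro x _; exact ⟨univ, rfl, trivial⟩
    · rintro V rfl
      simpa using S.nonempty'

/-- Shrinking each member of a family by intersecting with a fixed set shrinks the
Vietoris basic set. -/
theorem basicSet_image_inter_subset (𝒱 : Set (Set X)) (A : Set X) :
    NEClosed.basicSet ((fun V => V ∩ A) '' 𝒱) ⊆ NEClosed.basicSet 𝒱 := by
  rintro S ⟨h1, h2⟩
  constructor
  · intro x hx
    obtain ⟨t, ⟨V, hV, rfl⟩, hxt⟩ := h1 hx
    exact ⟨V, hV, hxt.1⟩
  · intro V hV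
    exact (h2 _ ⟨V, hV, rfl⟩).mono fun x hx => ⟨hx.1, hx.2.1⟩

end Stmt4Aux

/-- If `𝓕(X)` admits a continuous selection and `p` has a countable clopen neighbourhood
base, then `𝓕(X)` admits a `p`-maximal continuous selection. -/
theorem stmt_4 {X : Type u} [TopologicalSpace X] [T2Space X]
    (hsel : ∃ f : NEClosed X → X, IsVSelection f) (p : X)
    (hbase : ∃ B : ℕ → Set X, (∀ n, IsClopen (B n) ∧ p ∈ B n) ∧
      ∀ V : Set X, IsOpen V → p ∈ V → ∃ n, B n ⊆ V) :
    ∃ f : NEClosed X → X, IsVSelection f ∧ PMaximal f p := by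
  classical
  obtain ⟨f, hfc, hfsel⟩ := hsel
  obtain ⟨B, hB, hBbase⟩ := hbase
  -- The decreasing clopen base `D`, with `D 0 = univ`.
  set D : ℕ → Set X := fun n => ⋂ i ∈ Finset.range n, B i with hDdef
  have hD0 : D 0 = univ := by simp [hDdef]
  have hclop : ∀ n, IsClopen (D n) := fun n =>
    isClopen_biInter_finset fun i _ => (hB i).1
  have hpD : ∀ n, p ∈ D n := fun n => by
    simp only [hDdef, mem_iInter]
    exact fun i _ => (hB i).2
  have hanti : ∀ m n : ℕ, m ≤ n → D n ⊆ D m := by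
    intro m n hmn
    apply biInter_subset_biInter_left
    intro i hi
    exact Finset.mem_range.mpr (lt_of_lt_of_le (Finset.mem_range.mp hi) hmn)
  have hDbase : ∀ V : Set X, IsOpen V → p ∈ V → ∃ n, D n ⊆ V := by
    intro V hV hpV
    obtain ⟨n, hn⟩ := hBbase V hV hpV
    refine ⟨n + 1, fun x hx => hn ?_⟩
    simp only [hDdef, mem_iInter] at hx
    exact hx n (Finset.mem_range.mpr (Nat.lt_succ_self n))
  -- existence of an index where `S` misses `D n`, for `p ∉ S`
  have hDm : ∀ S : NEClosed X, p ∉ S.carrier → ∃ n, S.carrier ∩ D n = ∅ := by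
    intro S hS
    obtain ⟨n, hn⟩ := hDbase S.carrierᶜ S.closed'.isOpen_compl hS
    exact ⟨n, eq_empty_of_forall_notMem fun x hx => hn hx.2 hx.1⟩
  set m : NEClosed X → ℕ := fun S => sInf {n | S.carrier ∩ D n = ∅} with hmdef
  have hm_spec : ∀ S : NEClosed X, p ∉ S.carrier → S.carrier ∩ D (m S) = ∅ :=
    fun S hS => Nat.sInf_mem (hDm S hS)
  have hm_pos : ∀ S : NEClosed X, p ∉ S.carrier → 0 < m S := by
    intro S hS
    rcases Nat.eq_zero_or_pos (m S) with h | h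
    · exfalso
      have := hm_spec S hS
      rw [h, hD0, inter_univ] at this
      exact S.nonempty'.ne_empty this
    · exact h
  have hm_min : ∀ S : NEClosed X, ∀ n, n < m S → (S.carrier ∩ D n).Nonempty := by
    intro S n hn
    rw [nonempty_iff_ne_empty]
    exact Nat.notMem_of_lt_sInf hn
  have hres_ne : ∀ S : NEClosed X, p ∉ S.carrier → (S.carrier ∩ D (m S - 1)).Nonempty :=
    fun S hS => hm_min S _ (Nat.sub_lt (hm_pos S hS) one_pos)
  -- the modified selection
  set res : ∀ S : NEClosed X, p ∉ S.carrier → NEClosed X := fun S hS =>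
    ⟨S.carrier ∩ D (m S - 1), hres_ne S hS, S.closed'.inter (hclop _).isClosed⟩ with hresdef
  set g : NEClosed X → X := fun S =>
    if h : p ∈ S.carrier then p else f (res S h) with hgdef
  have hg_pos : ∀ S : NEClosed X, p ∈ S.carrier → g S = p := fun S h => dif_pos h
  have hg_neg : ∀ (S : NEClosed X) (h : p ∉ S.carrier), g S = f (res S h) :=
    fun S h => dif_neg h
  have hg_mem : ∀ S : NEClosed X, g S ∈ S.carrier := by
    intro S
    by_cases h : p ∈ S.carrier
    · rw [hg_pos S h]; exact h
    · rw [hg_neg S h]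
      exact (hfsel (res S h)).1
  refine ⟨g, ⟨?_, hg_mem⟩, hg_pos⟩
  -- continuity
  rw [continuous_def]
  intro U hU
  rw [vietoris_basis.isOpen_iff]
  intro S hS
  by_cases hp : p ∈ S.carrier
  · -- near a set containing `p`
    have hpU : p ∈ U := by rwa [mem_preimage, hg_pos S hp] at hS
    obtain ⟨n, hn⟩ := hDbase U hU hpU
    refine ⟨NEClosed.basicSet {univ, D n}, ⟨{univ, D n}, (finite_singleton _).insert _, ?_,
      rfl⟩, ⟨?_, ?_⟩, ?_⟩
    · rintro V (rfl | rfl)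
      · exact isOpen_univ
      · exact (hclop n).isOpen
    · intro x _
      exact ⟨univ, Or.inl rfl, trivial⟩
    · rintro V (rfl | rfl)
      · simpa using S.nonempty'
      · exact ⟨p, hp, hpD n⟩
    · rintro S' ⟨_, hS'2⟩
      by_cases hp' : p ∈ S'.carrier
      · rw [mem_preimage, hg_pos S' hp']
        exact hpU
      · rw [mem_preimage, hg_neg S' hp']
        have hmeet : (S'.carrier ∩ D n).Nonempty := hS'2 (D n) (Or.inr rfl)
        have hnm : n < m S' := by
          by_contra hc
          push_neg at hc
          have : S'.carrier ∩ D n = ∅ := by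
            apply eq_empty_of_forall_notMem
            intro x hx
            have : x ∈ S'.carrier ∩ D (m S') := ⟨hx.1, hanti _ _ hc hx.2⟩
            rw [hm_spec S' hp'] at this
            exact this
          exact hmeet.ne_empty this
        have hsub : D (m S' - 1) ⊆ D n := hanti n _ (Nat.le_sub_one_of_lt hnm)
        exact hn (hsub ((hfsel (res S' hp')).2))
  · -- near a set not containing `p`
    set k : ℕ := m S - 1 with hkdef
    have hmk : m S = k + 1 := (Nat.succ_pred_eq_of_pos (hm_pos S hp)).symm
    have hSk1 : S.carrier ∩ D (k + 1) = ∅ := hmk ▸ hm_spec S hp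
    have hresU : res S hp ∈ f ⁻¹' U := by
      rw [mem_preimage]
      rwa [mem_preimage, hg_neg S hp] at hS
    obtain ⟨t, ⟨𝒱, h𝒱f, h𝒱o, rfl⟩, hresmem, htsub⟩ :=
      vietoris_basis.exists_subset_of_mem_open hresU (hU.preimage hfc)
    -- shrink 𝒱 to avoid `D (k+1)`
    set 𝒱' : Set (Set X) := (fun V => V ∩ (D (k + 1))ᶜ) '' 𝒱 with h𝒱'def
    have h𝒱'o : ∀ V ∈ 𝒱', IsOpen V := by
      rintro V ⟨V, hV, rfl⟩
      exact (h𝒱o V hV).inter (hclop _).compl.isOpen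
    have hres_compl : (res S hp).carrier ⊆ (D (k + 1))ᶜ := by
      intro x hx hxD
      have : x ∈ S.carrier ∩ D (k + 1) := ⟨hx.1, hxD⟩
      rw [hSk1] at this
      exact this
    have hresmem' : res S hp ∈ NEClosed.basicSet 𝒱' := by
      obtain ⟨hc1, hc2⟩ := hresmem
      constructor
      · intro x hx
        obtain ⟨V, hV, hxV⟩ := hc1 hx
        exact ⟨V ∩ (D (k + 1))ᶜ, ⟨V, hV, rfl⟩, hxV, hres_compl hx⟩
      · rintro V ⟨V, hV, rfl⟩
        exact (hc2 V hV).mono fun x hx => ⟨hx.1, hx.2, hres_compl hx.1⟩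
    have h𝒱'sub : NEClosed.basicSet 𝒱' ⊆ NEClosed.basicSet 𝒱 :=
      basicSet_image_inter_subset 𝒱 _
    -- `𝒱'` is nonempty
    obtain ⟨x₀, hx₀⟩ := (res S hp).nonempty'
    obtain ⟨V₀, hV₀, _⟩ := hresmem'.1 hx₀
    -- disjointness from `D (k+1)`
    have h𝒱'disj : ∀ V ∈ 𝒱', V ⊆ (D (k + 1))ᶜ := by
      rintro V ⟨V, hV, rfl⟩
      exact fun x hx => hx.2
    -- the neighbourhood of `S`
    set 𝒲 : Set (Set X) := (fun V => V ∩ D k) '' 𝒱' ∪ {(D k)ᶜ ∪ (V₀ ∩ D k)} with h𝒲def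
    have h𝒲f : 𝒲.Finite := ((h𝒱f.image _).image _).union (finite_singleton _)
    refine ⟨NEClosed.basicSet 𝒲, ⟨𝒲, h𝒲f, ?_, rfl⟩, ⟨?_, ?_⟩, ?_⟩
    · rintro W (⟨V, hV, rfl⟩ | rfl)
      · exact (h𝒱'o V hV).inter (hclop k).isOpen
      · exact (hclop k).compl.isOpen.union ((h𝒱'o V₀ hV₀).inter (hclop k).isOpen)
    · -- S covered by ⋃₀ 𝒲
      intro x hx
      by_cases hxk : x ∈ D k
      · have hxres : x ∈ (res S hp).carrier := ⟨hx, hkdef ▸ hxk⟩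
        obtain ⟨V, hV, hxV⟩ := hresmem'.1 hxres
        exact ⟨V ∩ D k, Or.inl ⟨V, hV, rfl⟩, hxV, hxk⟩
      · exact ⟨(D k)ᶜ ∪ (V₀ ∩ D k), Or.inr rfl, Or.inl hxk⟩
    · -- S meets each member of 𝒲
      rintro W (⟨V, hV, rfl⟩ | rfl)
      · exact (hresmem'.2 V hV).mono fun x hx => ⟨hx.1.1, hx.2, hx.1.2⟩
      · exact (hresmem'.2 V₀ hV₀).mono fun x hx => ⟨hx.1.1, Or.inr ⟨hx.2, hx.1.2⟩⟩
    · -- every member of the basic set maps into U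
      rintro S' ⟨h1, h2⟩
      -- S' ∩ D k ⊆ ⋃₀ 𝒱'
      have hcov : S'.carrier ∩ D k ⊆ ⋃₀ 𝒱' := by
        rintro x ⟨hxS, hxk⟩
        rcases h1 hxS with ⟨W, (⟨V, hV, rfl⟩ | rfl), hxW⟩
        · exact ⟨V, hV, hxW.1⟩
        · rcases hxW with hxW | hxW
          · exact absurd hxk hxW
          · exact ⟨V₀, hV₀, hxW.1⟩
      -- S' misses D (k+1)
      have hS'k1 : S'.carrier ∩ D (k + 1) = ∅ := by
        apply eq_empty_of_forall_notMem
        rintro x ⟨hxS, hxk1⟩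
        obtain ⟨V, hV, hxV⟩ := hcov ⟨hxS, hanti k (k + 1) (Nat.le_succ k) hxk1⟩
        exact h𝒱'disj V hV hxV hxk1
      have hp' : p ∉ S'.carrier := by
        intro hc
        have : p ∈ S'.carrier ∩ D (k + 1) := ⟨hc, hpD _⟩
        rw [hS'k1] at this
        exact this
      -- S' meets D k
      have hS'k : (S'.carrier ∩ D k).Nonempty :=
        (h2 _ (Or.inl ⟨V₀, hV₀, rfl⟩)).mono fun x hx => ⟨hx.1, hx.2.2⟩
      -- m S' = k + 1
      have hmS' : m S' = k + 1 := by
        apply le_antisymm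
        · exact Nat.sInf_le hS'k1
        · by_contra hc
          push_neg at hc
          have hle : m S' ≤ k := Nat.lt_succ_iff.mp hc
          have := hm_spec S' hp'
          have hne : (S'.carrier ∩ D (m S')).Nonempty :=
            hS'k.mono fun x hx => ⟨hx.1, hanti _ _ hle hx.2⟩
          exact hne.ne_empty this
      have hrescar : (res S' hp').carrier = S'.carrier ∩ D k := by
        simp only [hresdef, hmS', Nat.add_sub_cancel]
      -- res S' ∈ basicSet 𝒱'
      have hres' : res S' hp' ∈ NEClosed.basicSet 𝒱' := by
        constructor
        · rw [hrescar]; exact hcov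
        · intro V hV
          rw [hrescar]
          exact (h2 _ (Or.inl ⟨V, hV, rfl⟩)).mono fun x hx => ⟨⟨hx.1, hx.2.2⟩, hx.2.1⟩
      rw [mem_preimage, hg_neg S' hp']
      exact htsub (h𝒱'sub hres')
end

section
/- Let X be a Hausdorff space admitting a continuous selection for 𝓕(X), and let p ∈ X be a point such that the singleton {p} is the intersection of countably many clopen subsets of X. Then 𝓕(X) admits a p-minimal continuous selection. -/
open Set Topology Filter

universe u v

namespace MinSelAux

variable {X : Type u} [TopologicalSpace X]

/-- The generating family of the Vietoris topology. -/
def gen (X : Type u) [TopologicalSpace X] : Set (Set (NEClosed X)) :=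
  {t | ∃ 𝒱 : Set (Set X), 𝒱.Finite ∧ (∀ V ∈ 𝒱, IsOpen V) ∧ t = NEClosed.basicSet 𝒱}

lemma topo_eq : (inferInstance : TopologicalSpace (NEClosed X)) =
    TopologicalSpace.generateFrom (gen X) := rfl

lemma isOpen_of_gen {t : Set (NEClosed X)} (ht : t ∈ gen X) : IsOpen t :=
  TopologicalSpace.isOpen_generateFrom_of_mem ht

lemma isOpen_sub {U : Set X} (hU : IsOpen U) :
    IsOpen {S : NEClosed X | S.carrier ⊆ U} := by
  have he : {S : NEClosed X | S.carrier ⊆ U} = NEClosed.basicSet {U} := by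
    ext S
    simp only [NEClosed.basicSet, mem_setOf_eq, sUnion_singleton, mem_singleton_iff]
    constructor
    · intro h
      refine ⟨h, fun V hV => ?_⟩
      subst hV
      obtain ⟨x, hx⟩ := S.nonempty'
      exact ⟨x, hx, h hx⟩
    · exact fun h => h.1
  rw [he]
  exact isOpen_of_gen ⟨{U}, finite_singleton U, by simpa using hU, rfl⟩

lemma isOpen_hits {U : Set X} (hU : IsOpen U) :
    IsOpen {S : NEClosed X | (S.carrier ∩ U).Nonempty} := by
  have he : {S : NEClosed X | (S.carrier ∩ U).Nonempty}
      = NEClosed.basicSet {Set.univ, U} := by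
    ext S
    simp only [NEClosed.basicSet, mem_setOf_eq]
    constructor
    · intro h
      refine ⟨by simp, fun V hV => ?_⟩
      rcases hV with hV | hV
      · subst hV; simpa using S.nonempty'
      · simp only [mem_singleton_iff] at hV; subst hV; exact h
    · intro h
      exact h.2 U (by simp)
  rw [he]
  exact isOpen_of_gen ⟨{Set.univ, U}, (finite_singleton U).insert _,
    by rintro V (rfl | hV); · exact isOpen_univ
       · simp only [mem_singleton_iff] at hV; subst hV; exact hU, rfl⟩

open Classical in
/-- Intersect a nonempty closed set with a closed set `K` when the intersection is
nonempty (otherwise return the set itself). -/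
noncomputable def cutK (K : Set X) (hK : IsClosed K) (S : NEClosed X) : NEClosed X :=
  if h : (S.carrier ∩ K).Nonempty then ⟨S.carrier ∩ K, h, S.closed'.inter hK⟩ else S

lemma cutK_carrier {K : Set X} (hK : IsClosed K) {S : NEClosed X}
    (h : (S.carrier ∩ K).Nonempty) : (cutK K hK S).carrier = S.carrier ∩ K := by
  rw [cutK, dif_pos h]

lemma continuousAt_cutK {K : Set X} (hK : IsClopen K) {S₀ : NEClosed X}
    (h₀ : (S₀.carrier ∩ K).Nonempty) : ContinuousAt (cutK K hK.isClosed) S₀ := by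
  rw [ContinuousAt]
  refine (TopologicalSpace.tendsto_nhds_generateFrom_iff (g := gen X)).mpr ?_
  rintro t ⟨𝒱, h𝒱fin, h𝒱open, rfl⟩ hmem
  simp only [NEClosed.basicSet, mem_setOf_eq, cutK_carrier hK.isClosed h₀] at hmem
  obtain ⟨hcov, hhit⟩ := hmem
  -- the open neighbourhood of S₀ carried into the basic set
  set O : Set (NEClosed X) :=
    {S | S.carrier ⊆ ⋃₀ 𝒱 ∪ Kᶜ} ∩ ({S | (S.carrier ∩ K).Nonempty} ∩
      ⋂ V ∈ 𝒱, {S : NEClosed X | (S.carrier ∩ (K ∩ V)).Nonempty}) with hO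
  have hOopen : IsOpen O := by
    refine (isOpen_sub ((isOpen_sUnion fun V hV => h𝒱open V hV).union hK.isClosed.isOpen_compl)).inter
      ((isOpen_hits hK.isOpen).inter ?_)
    exact h𝒱fin.isOpen_biInter fun V hV => isOpen_hits (hK.isOpen.inter (h𝒱open V hV))
  have hS₀O : S₀ ∈ O := by
    refine ⟨fun x hx => ?_, h₀, ?_⟩
    · by_cases hxK : x ∈ K
      · exact Or.inl (hcov ⟨hx, hxK⟩)
      · exact Or.inr hxK
    · simp only [mem_iInter, mem_setOf_eq]
      intro V hV
      obtain ⟨x, hx⟩ := hhit V hV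
      exact ⟨x, hx.1.1, hx.1.2, hx.2⟩
  refine Filter.mem_of_superset (hOopen.mem_nhds hS₀O) ?_
  rintro S ⟨hsub, hne, hhits⟩
  simp only [mem_iInter, mem_setOf_eq] at hhits
  simp only [mem_preimage, NEClosed.basicSet, mem_setOf_eq, cutK_carrier hK.isClosed hne]
  constructor
  · rintro x ⟨hxS, hxK⟩
    rcases hsub hxS with h | h
    · exact h
    · exact absurd hxK h
  · intro V hV
    obtain ⟨x, hx⟩ := hhits V hV
    exact ⟨x, ⟨hx.1, hx.2.1⟩, hx.2.2⟩

/-- From an open set of `𝓕(X)` around the singleton `{p}` one can extract an open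
`U ∋ p` such that every nonempty closed subset of `U` belongs to the open set. -/
lemma exists_open_of_singleton_mem {p : X} {O : Set (NEClosed X)} (hO : IsOpen O)
    {S₀ : NEClosed X} (hS₀c : S₀.carrier = {p}) (hS₀ : S₀ ∈ O) :
    ∃ U : Set X, IsOpen U ∧ p ∈ U ∧ ∀ T : NEClosed X, T.carrier ⊆ U → T ∈ O := by
  have hbasis := TopologicalSpace.isTopologicalBasis_of_subbasis (topo_eq (X := X))
  obtain ⟨v, ⟨F, ⟨hFfin, hFsub⟩, rfl⟩, hS₀v, hvO⟩ :=
    hbasis.exists_subset_of_mem_open hS₀ hO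
  have key : ∀ t : Set (NEClosed X), ∃ U : Set X, IsOpen U ∧ p ∈ U ∧
      (t ∈ F → ∀ T : NEClosed X, T.carrier ⊆ U → T ∈ t) := by
    intro t
    by_cases htF : t ∈ F
    · obtain ⟨𝒱, h𝒱fin, h𝒱open, rfl⟩ := hFsub htF
      have hS₀t : S₀ ∈ NEClosed.basicSet 𝒱 := mem_sInter.1 hS₀v _ htF
      obtain ⟨hcov, hhit⟩ := hS₀t
      have hp𝒱 : ∀ V ∈ 𝒱, p ∈ V := by
        intro V hV
        obtain ⟨x, hx1, hx2⟩ := hhit V hV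
        rw [hS₀c, mem_singleton_iff] at hx1
        subst hx1
        exact hx2
      obtain ⟨V₀, hV₀⟩ : ∃ V₀, V₀ ∈ 𝒱 := by
        have hp : p ∈ ⋃₀ 𝒱 := hcov (by rw [hS₀c]; rfl)
        obtain ⟨V₀, hV₀, _⟩ := hp
        exact ⟨V₀, hV₀⟩
      refine ⟨⋂₀ 𝒱, h𝒱fin.isOpen_sInter h𝒱open, mem_sInter.2 hp𝒱, fun _ T hT => ?_⟩
      refine ⟨fun x hx => ⟨V₀, hV₀, mem_sInter.1 (hT hx) V₀ hV₀⟩, fun V hV => ?_⟩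
      obtain ⟨x, hx⟩ := T.nonempty'
      exact ⟨x, hx, mem_sInter.1 (hT hx) V hV⟩
    · exact ⟨Set.univ, isOpen_univ, mem_univ p, fun h => absurd h htF⟩
  choose U hUopen hUp hUt using key
  refine ⟨⋂ t ∈ F, U t, hFfin.isOpen_biInter fun t _ => hUopen t,
    mem_iInter₂.2 fun t _ => hUp t, fun T hT => hvO ?_⟩
  intro t htF
  exact hUt t htF T fun x hx => mem_iInter₂.1 (hT hx) t htF

open Classical in
/-- The candidate `p`-minimal selection. -/
noncomputable def gSel (f : NEClosed X → X) (C : ℕ → Set X)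
    (hC : ∀ n, IsClopen (C n)) (S : NEClosed X) : X :=
  if h : ∃ n, (S.carrier ∩ (C n)ᶜ).Nonempty then
    f (cutK (C (Nat.find h))ᶜ (hC (Nat.find h)).isOpen.isClosed_compl S)
  else f S

open Classical in
lemma gSel_eq {f : NEClosed X → X} {C : ℕ → Set X} {hC : ∀ n, IsClopen (C n)}
    {S : NEClosed X} (h : ∃ n, (S.carrier ∩ (C n)ᶜ).Nonempty) :
    gSel f C hC S
      = f (cutK (C (Nat.find h))ᶜ (hC (Nat.find h)).isOpen.isClosed_compl S) :=
  dif_pos h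

open Classical in
lemma gSel_neg {f : NEClosed X → X} {C : ℕ → Set X} {hC : ∀ n, IsClopen (C n)}
    {S : NEClosed X} (h : ¬∃ n, (S.carrier ∩ (C n)ᶜ).Nonempty) :
    gSel f C hC S = f S :=
  dif_neg h

end MinSelAux

/-- If `𝓕(X)` admits a continuous selection and `{p}` is a countable intersection of clopen
sets, then `𝓕(X)` admits a `p`-minimal continuous selection. -/
theorem stmt_5 {X : Type u} [TopologicalSpace X] [T2Space X]
    (hsel : ∃ f : NEClosed X → X, IsVSelection f) (p : X)
    (hint : ∃ C : ℕ → Set X, (∀ n, IsClopen (C n)) ∧ (⋂ n, C n) = {p}) :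
    ∃ f : NEClosed X → X, IsVSelection f ∧ PMinimal f p := by
  classical
  obtain ⟨f, hf⟩ := hsel
  obtain ⟨C, hC, hCeq⟩ := hint
  have hpC : ∀ n, p ∈ C n := fun n => by
    have hp : p ∈ ⋂ n, C n := by rw [hCeq]; rfl
    exact mem_iInter.1 hp n
  refine ⟨MinSelAux.gSel f C hC, ⟨?_, ?_⟩, ?_⟩
  · -- continuity
    rw [continuous_iff_continuousAt]
    intro S₀
    by_cases hex : ∃ n, (S₀.carrier ∩ (C n)ᶜ).Nonempty
    · set n := Nat.find hex with hn
      have hKclopen : IsClopen (C n)ᶜ := (hC n).compl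
      have hfind : (S₀.carrier ∩ (C n)ᶜ).Nonempty := Nat.find_spec hex
      set O : Set (NEClosed X) := {S : NEClosed X | (S.carrier ∩ (C n)ᶜ).Nonempty} ∩
        ⋂ m ∈ Finset.range n, {S : NEClosed X | S.carrier ⊆ C m} with hO
      have hOopen : IsOpen O := by
        refine (MinSelAux.isOpen_hits hKclopen.isOpen).inter ?_
        exact isOpen_biInter_finset fun m _ => MinSelAux.isOpen_sub (hC m).isOpen
      have hS₀O : S₀ ∈ O := by
        refine ⟨hfind, ?_⟩
        simp only [Finset.mem_range, mem_iInter, mem_setOf_eq]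
        intro m hm x hx
        by_contra hxm
        exact Nat.find_min hex hm ⟨x, hx, hxm⟩
      have hcont : ContinuousAt
          (fun S => f (MinSelAux.cutK (C n)ᶜ hKclopen.isClosed S)) S₀ :=
        hf.1.continuousAt.comp (MinSelAux.continuousAt_cutK hKclopen hfind)
      refine hcont.congr ?_
      refine Filter.eventuallyEq_of_mem (hOopen.mem_nhds hS₀O) ?_
      rintro S ⟨hS1, hS2⟩
      have hex' : ∃ m, (S.carrier ∩ (C m)ᶜ).Nonempty := ⟨n, hS1⟩
      have hfe : Nat.find hex' = n := by
        rw [Nat.find_eq_iff]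
        refine ⟨hS1, fun m hm => ?_⟩
        simp only [mem_iInter, mem_setOf_eq, Finset.mem_range] at hS2
        rintro ⟨x, hxS, hxm⟩
        exact hxm (hS2 m hm hxS)
      rw [MinSelAux.gSel_eq hex', hfe]
    · -- S₀ is the singleton {p}
      have hsub : ∀ m, S₀.carrier ⊆ C m := by
        intro m x hx
        by_contra hxm
        exact hex ⟨m, x, hx, hxm⟩
      have hcar : S₀.carrier = {p} := by
        apply Subset.antisymm
        · rw [← hCeq]
          exact fun x hx => mem_iInter.2 fun m => hsub m hx
        · obtain ⟨x, hx⟩ := S₀.nonempty'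
          have hxp : x ∈ ({p} : Set X) := by
            rw [← hCeq]; exact mem_iInter.2 fun m => hsub m hx
          rw [mem_singleton_iff] at hxp
          subst hxp
          exact singleton_subset_iff.2 hx
      have hfp : f S₀ = p := by
        have h2 := hf.2 S₀
        rw [hcar, mem_singleton_iff] at h2
        exact h2
      have hgp : MinSelAux.gSel f C hC S₀ = p := by
        rw [MinSelAux.gSel_neg hex, hfp]
      rw [ContinuousAt, hgp, tendsto_def]
      intro s hs
      obtain ⟨W, hWs, hWopen, hpW⟩ := mem_nhds_iff.1 hs
      have hfW : f ⁻¹' W ∈ 𝓝 S₀ :=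
        hf.1.continuousAt.preimage_mem_nhds (by rw [hfp]; exact hWopen.mem_nhds hpW)
      obtain ⟨O, hOsub, hOopen, hS₀O⟩ := mem_nhds_iff.1 hfW
      obtain ⟨U, hUopen, hpU, hU⟩ :=
        MinSelAux.exists_open_of_singleton_mem hOopen hcar hS₀O
      have hmemN : S₀ ∈ {S : NEClosed X | S.carrier ⊆ U} := by
        simp only [mem_setOf_eq, hcar]
        exact singleton_subset_iff.2 hpU
      refine Filter.mem_of_superset ((MinSelAux.isOpen_sub hUopen).mem_nhds hmemN) ?_
      intro S hSU
      simp only [mem_setOf_eq] at hSU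
      by_cases hexS : ∃ m, (S.carrier ∩ (C m)ᶜ).Nonempty
      · rw [mem_preimage, MinSelAux.gSel_eq hexS]
        refine hWs (hOsub (hU _ ?_))
        rw [MinSelAux.cutK_carrier _ (Nat.find_spec hexS)]
        exact fun x hx => hSU hx.1
      · rw [mem_preimage, MinSelAux.gSel_neg hexS]
        exact hWs (hOsub (hU _ hSU))
  · -- selection property
    intro S
    by_cases hexS : ∃ m, (S.carrier ∩ (C m)ᶜ).Nonempty
    · rw [MinSelAux.gSel_eq hexS]
      have h1 := hf.2 (MinSelAux.cutK (C (Nat.find hexS))ᶜ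
        (hC (Nat.find hexS)).isOpen.isClosed_compl S)
      rw [MinSelAux.cutK_carrier _ (Nat.find_spec hexS)] at h1
      exact h1.1
    · rw [MinSelAux.gSel_neg hexS]
      exact hf.2 S
  · -- p-minimality
    intro S hSne
    have hxex : ∃ x ∈ S.carrier, x ≠ p := by
      by_contra hcon
      push_neg at hcon
      apply hSne
      apply Subset.antisymm (fun x hx => mem_singleton_iff.2 (hcon x hx))
      obtain ⟨x, hx⟩ := S.nonempty'
      have hxp := hcon x hx
      subst hxp
      exact singleton_subset_iff.2 hx
    obtain ⟨x, hxS, hxp⟩ := hxex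
    have hexS : ∃ m, (S.carrier ∩ (C m)ᶜ).Nonempty := by
      have hxn : x ∉ ⋂ n, C n := by rw [hCeq]; simpa using hxp
      rw [mem_iInter] at hxn
      push_neg at hxn
      obtain ⟨m, hm⟩ := hxn
      exact ⟨m, x, hxS, hm⟩
    rw [MinSelAux.gSel_eq hexS]
    have h1 := hf.2 (MinSelAux.cutK (C (Nat.find hexS))ᶜ
      (hC (Nat.find hexS)).isOpen.isClosed_compl S)
    rw [MinSelAux.cutK_carrier _ (Nat.find_spec hexS)] at h1
    intro hcontra
    rw [hcontra] at h1
    exact h1.2 (hpC _)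
end

section
/- Let X be a nonempty Hausdorff space, f a continuous selection for 𝓕(X), and V ⊆ X an open set. Then ⟨V⟩_f is open in X and [V]_f is a nonempty closed subset of X belonging to Δ(X). Moreover, if V ≠ X, then [V]_f = ⟨V⟩_f ∪ {f(X \ V)} and, in particular, [V]_f is clopen modulo the point f(X \ V). -/
open Set Topology Filter

universe u v

section Aux

variable {X : Type u} [TopologicalSpace X]

theorem NEClosed.ext' {S T : NEClosed X} (h : S.carrier = T.carrier) : S = T := by
  cases S; cases T; simp_all

theorem vietoris_eq : (inferInstance : TopologicalSpace (NEClosed X)) =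
    TopologicalSpace.generateFrom
      {t | ∃ 𝒱 : Set (Set X), 𝒱.Finite ∧ (∀ V ∈ 𝒱, IsOpen V) ∧ t = NEClosed.basicSet 𝒱} :=
  rfl

variable [T1Space X]

/-- The map `x ↦ Vᶜ ∪ {x}` as a map into `𝓕(X)`. -/
def uPt (V : Set X) (hV : IsOpen V) (x : X) : NEClosed X :=
  ⟨Vᶜ ∪ {x}, ⟨x, Or.inr rfl⟩, hV.isClosed_compl.union isClosed_singleton⟩

theorem bracketSel_eq (f : NEClosed X → X) (V : Set X) (hV : IsOpen V) :
    bracketSel f V hV = {x | f (uPt V hV x) = x} := rfl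

theorem uPt_mem_basic {V : Set X} {hV : IsOpen V} {𝒱 : Set (Set X)} {x y : X}
    (hx : uPt V hV x ∈ NEClosed.basicSet 𝒱) (hy : ∀ O ∈ 𝒱, x ∈ O → y ∈ O) :
    uPt V hV y ∈ NEClosed.basicSet 𝒱 := by
  obtain ⟨hx1, hx2⟩ := hx
  have hxU : x ∈ ⋃₀ 𝒱 := hx1 (Or.inr rfl)
  obtain ⟨O₀, hO₀, hxO₀⟩ := hxU
  have hyU : y ∈ ⋃₀ 𝒱 := ⟨O₀, hO₀, hy O₀ hO₀ hxO₀⟩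
  constructor
  · rintro z (hz | rfl)
    · exact hx1 (Or.inl hz)
    · exact hyU
  · intro O hO
    obtain ⟨z, hz1, hz2⟩ := hx2 O hO
    rcases hz1 with hz1 | rfl
    · exact ⟨z, Or.inl hz1, hz2⟩
    · exact ⟨y, Or.inr rfl, hy O hO hz2⟩

theorem continuous_uPt (V : Set X) (hV : IsOpen V) : Continuous (uPt V hV) := by
  have key : ∀ t ∈ {t | ∃ 𝒱 : Set (Set X), 𝒱.Finite ∧ (∀ V ∈ 𝒱, IsOpen V) ∧
      t = NEClosed.basicSet 𝒱}, IsOpen (uPt V hV ⁻¹' t) := by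
    rintro t ⟨𝒱, hfin, hop, rfl⟩
    by_cases hc : Vᶜ ⊆ ⋃₀ 𝒱
    · have heq : uPt V hV ⁻¹' NEClosed.basicSet 𝒱 =
          ⋃₀ 𝒱 ∩ ⋂₀ {O ∈ 𝒱 | ¬(Vᶜ ∩ O).Nonempty} := by
        ext x
        constructor
        · rintro ⟨h1, h2⟩
          refine ⟨h1 (Or.inr rfl), ?_⟩
          rintro O ⟨hO, hOe⟩
          obtain ⟨z, hz1, hz2⟩ := h2 O hO
          rcases hz1 with hz1 | rfl
          · exact absurd ⟨z, hz1, hz2⟩ hOe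
          · exact hz2
        · rintro ⟨h1, h2⟩
          constructor
          · rintro z (hz | rfl)
            · exact hc hz
            · exact h1
          · intro O hO
            by_cases hOe : (Vᶜ ∩ O).Nonempty
            · obtain ⟨z, hz1, hz2⟩ := hOe
              exact ⟨z, Or.inl hz1, hz2⟩
            · exact ⟨x, Or.inr rfl, h2 O ⟨hO, hOe⟩⟩
      rw [heq]
      exact (isOpen_sUnion fun O hO => hop O hO).inter
        ((hfin.subset (sep_subset _ _)).isOpen_sInter fun O hO => hop O hO.1)
    · have heq : uPt V hV ⁻¹' NEClosed.basicSet 𝒱 = ∅ := by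
        ext x
        simp only [mem_preimage, mem_empty_iff_false, iff_false]
        rintro ⟨h1, _⟩
        exact hc fun z hz => h1 (Or.inl hz)
      rw [heq]; exact isOpen_empty
  exact continuous_generateFrom_iff.mpr key

theorem angleSel_isOpen (f : NEClosed X → X) (hf : IsVSelection f)
    (V : Set X) (hV : IsOpen V) : IsOpen (angleSel f V hV) := by
  classical
  rw [isOpen_iff_forall_mem_open]
  rintro x ⟨hxb, hxV⟩
  have hU : IsOpen (f ⁻¹' V) := hf.1.isOpen_preimage V hV
  have hmem : uPt V hV x ∈ f ⁻¹' V := by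
    have : f (uPt V hV x) = x := hxb
    simpa [mem_preimage, this] using hxV
  have hbasis := TopologicalSpace.isTopologicalBasis_of_subbasis (vietoris_eq (X := X))
  obtain ⟨B, hB, hxB, hBU⟩ := hbasis.exists_subset_of_mem_open hmem hU
  obtain ⟨𝔉, ⟨h𝔉fin, h𝔉sub⟩, rfl⟩ := hB
  choose 𝒱 h1 h2 h3 using fun t (ht : t ∈ 𝔉) => h𝔉sub ht
  have : Finite ↥𝔉 := h𝔉fin.to_subtype
  refine ⟨V ∩ ⋂ t : 𝔉, ⋂₀ {O ∈ 𝒱 t t.2 | x ∈ O}, ?_, ?_, ?_⟩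
  · rintro y ⟨hyV, hyI⟩
    have hyF : uPt V hV y ∈ ⋂₀ 𝔉 := by
      intro t ht
      have hxt : uPt V hV x ∈ t := hxB t ht
      rw [h3 t ht] at hxt ⊢
      refine uPt_mem_basic hxt fun O hO hxO => ?_
      have := mem_iInter.1 hyI ⟨t, ht⟩
      exact this O ⟨hO, hxO⟩
    have hfyV : f (uPt V hV y) ∈ V := hBU hyF
    have hfy : f (uPt V hV y) ∈ Vᶜ ∪ {y} := hf.2 (uPt V hV y)
    rcases hfy with h | h
    · exact absurd hfyV h
    · exact ⟨h, hyV⟩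
  · exact hV.inter (isOpen_iInter_of_finite fun t =>
      ((h1 t t.2).subset (sep_subset _ _)).isOpen_sInter fun O hO => h2 t t.2 O hO.1)
  · refine ⟨hxV, mem_iInter.2 fun t => mem_sInter.2 fun O hO => ?_⟩
    exact hO.2

end Aux

/-- For a continuous selection `f` and an open set `V`: `⟨V⟩_f` is open, `[V]_f` is a nonempty
closed set belonging to `Δ(X)`, and if `V ≠ X` then `[V]_f = ⟨V⟩_f ∪ {f(Vᶜ)}` and `[V]_f` is
clopen modulo the point `f(Vᶜ)`. -/
theorem stmt_6 {X : Type u} [TopologicalSpace X] [T2Space X] [Nonempty X]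
    (f : NEClosed X → X) (hf : IsVSelection f) (V : Set X) (hV : IsOpen V) :
    IsOpen (angleSel f V hV) ∧
    (bracketSel f V hV).Nonempty ∧ IsClosed (bracketSel f V hV) ∧
    bracketSel f V hV ∈ DeltaSet X ∧
    ∀ hne : V ≠ univ,
      bracketSel f V hV =
        angleSel f V hV ∪ {f ⟨Vᶜ, nonempty_compl.mpr hne, hV.isClosed_compl⟩} ∧
      ClopenModulo (bracketSel f V hV) (f ⟨Vᶜ, nonempty_compl.mpr hne, hV.isClosed_compl⟩) := by
  classical
  have hopen : IsOpen (angleSel f V hV) := angleSel_isOpen f hf V hV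
  have hclosed : IsClosed (bracketSel f V hV) := by
    rw [bracketSel_eq]
    exact isClosed_eq (hf.1.comp (continuous_uPt V hV)) continuous_id
  have key : ∀ hne : V ≠ univ,
      bracketSel f V hV =
        angleSel f V hV ∪ {f ⟨Vᶜ, nonempty_compl.mpr hne, hV.isClosed_compl⟩} ∧
      ClopenModulo (bracketSel f V hV)
        (f ⟨Vᶜ, nonempty_compl.mpr hne, hV.isClosed_compl⟩) := by
    intro hne
    set S : NEClosed X := ⟨Vᶜ, nonempty_compl.mpr hne, hV.isClosed_compl⟩ with hS
    set p := f S with hp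
    have hpV : p ∈ Vᶜ := hf.2 S
    have huPtp : uPt V hV p = S :=
      NEClosed.ext' (Set.union_eq_left.mpr (singleton_subset_iff.mpr hpV))
    have hpb : p ∈ bracketSel f V hV := by
      show f (uPt V hV p) = p
      rw [huPtp]
    have heq : bracketSel f V hV = angleSel f V hV ∪ {p} := by
      ext x
      constructor
      · intro hx
        by_cases hxV : x ∈ V
        · exact Or.inl ⟨hx, hxV⟩
        · have huPtx : uPt V hV x = S :=
            NEClosed.ext' (Set.union_eq_left.mpr (singleton_subset_iff.mpr hxV))
          have : f (uPt V hV x) = x := hx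
          rw [huPtx] at this
          exact Or.inr (by simp [← this, hp])
      · rintro (⟨h, _⟩ | h)
        · exact h
        · rw [mem_singleton_iff] at h; subst h; exact hpb
    refine ⟨heq, ⟨p, hpb⟩, hclosed, hpb, ?_⟩
    rw [heq, Set.union_diff_right, Set.diff_eq]
    exact hopen.inter isOpen_compl_singleton
  by_cases hne : V = univ
  · have hall : ∀ x, x ∈ bracketSel f V hV := by
      intro x
      have h := hf.2 (uPt V hV x)
      rcases h with h | h
      · exact absurd h (by simp [hne])
      · exact h
    have huniv : bracketSel f V hV = univ := eq_univ_of_forall hall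
    refine ⟨hopen, ⟨Classical.arbitrary X, hall _⟩, hclosed, ?_, key⟩
    refine ⟨Classical.arbitrary X, ?_⟩
    rw [huniv]
    exact ⟨univ_nonempty, isClosed_univ, mem_univ _,
      by rw [Set.diff_eq, Set.univ_inter]; exact isOpen_compl_singleton⟩
  · obtain ⟨heq, hcm⟩ := key hne
    exact ⟨hopen, hcm.1, hclosed, ⟨_, hcm⟩, key⟩
end

section
/- Let X be a Hausdorff space which is totally disconnected at a point p ∈ X (that is, {p} is an intersection of clopen subsets of X) and which admits a p-maximal continuous selection for 𝓕(X). Then X is zero-dimensional at p, i.e. p has a neighbourhood base of clopen sets. -/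
open Set Topology Filter

universe u v

theorem NEClosed.mk_eq_mk {X : Type u} [TopologicalSpace X] {s t : Set X} (h : s = t)
    {h1 h2 h3 h4} : (⟨s, h1, h2⟩ : NEClosed X) = ⟨t, h3, h4⟩ := by subst h; rfl

/-- Vietoris continuity of `x ↦ F ∪ {x}` for a fixed closed set `F`. -/
theorem continuous_union_singleton {X : Type u} [TopologicalSpace X] [T1Space X] (F : Set X)
    (hF : IsClosed F) :
    Continuous (fun x : X =>
      (⟨F ∪ {x}, ⟨x, Or.inr rfl⟩, hF.union isClosed_singleton⟩ : NEClosed X)) := by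
  refine continuous_generateFrom_iff.mpr ?_
  rintro t ⟨𝒱, hfin, hopen, rfl⟩
  by_cases hFsub : F ⊆ ⋃₀ 𝒱
  · have heq : (fun x : X =>
        (⟨F ∪ {x}, ⟨x, Or.inr rfl⟩, hF.union isClosed_singleton⟩ : NEClosed X)) ⁻¹'
          NEClosed.basicSet 𝒱
        = ⋃₀ 𝒱 ∩ ⋂ W ∈ {W ∈ 𝒱 | ¬(F ∩ W).Nonempty}, W := by
      ext x
      simp only [NEClosed.basicSet, Set.mem_preimage, Set.mem_setOf_eq, Set.mem_inter_iff,
        Set.mem_iInter]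
      constructor
      · rintro ⟨hsub, hmeet⟩
        refine ⟨hsub (Or.inr rfl), ?_⟩
        rintro W ⟨hW𝒱, hWF⟩
        obtain ⟨y, hy, hyW⟩ := hmeet W hW𝒱
        rcases hy with h | h
        · exact absurd ⟨y, h, hyW⟩ hWF
        · rw [Set.mem_singleton_iff] at h; exact h ▸ hyW
      · rintro ⟨hx, hW⟩
        refine ⟨Set.union_subset hFsub (by simpa using hx), ?_⟩
        intro W hWV
        by_cases h : (F ∩ W).Nonempty
        · obtain ⟨y, hyF, hyW⟩ := h; exact ⟨y, Or.inl hyF, hyW⟩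
        · exact ⟨x, Or.inr rfl, hW W ⟨hWV, h⟩⟩
    rw [heq]
    exact (isOpen_sUnion fun W hW => hopen W hW).inter
      ((hfin.subset (Set.sep_subset _ _)).isOpen_biInter fun W hW => hopen W hW.1)
  · have heq : (fun x : X =>
        (⟨F ∪ {x}, ⟨x, Or.inr rfl⟩, hF.union isClosed_singleton⟩ : NEClosed X)) ⁻¹'
          NEClosed.basicSet 𝒱 = ∅ := by
      ext x
      simp only [NEClosed.basicSet, Set.mem_preimage, Set.mem_setOf_eq, Set.mem_empty_iff_false,
        iff_false, not_and]
      intro hsub _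
      exact hFsub fun y hy => hsub (Or.inl hy)
    rw [heq]; exact isOpen_empty

/-- If `X` is totally disconnected at `p` (i.e. `{p}` is an intersection of clopen sets) and
`𝓕(X)` admits a `p`-maximal continuous selection, then `X` is zero-dimensional at `p` (i.e. `p`
has a neighbourhood base of clopen sets). -/
theorem stmt_9 {X : Type u} [TopologicalSpace X] [T2Space X] (p : X)
    (htd : ∃ 𝒞 : Set (Set X), (∀ C ∈ 𝒞, IsClopen C) ∧ ⋂₀ 𝒞 = {p})
    (hsel : ∃ f : NEClosed X → X, IsVSelection f ∧ PMaximal f p) :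
    ∀ V : Set X, IsOpen V → p ∈ V → ∃ U : Set X, IsClopen U ∧ p ∈ U ∧ U ⊆ V := by
  obtain ⟨𝒞, h𝒞clopen, h𝒞inter⟩ := htd
  obtain ⟨f, ⟨hfc, hfsel⟩, hfmax⟩ := hsel
  intro V hV hpV
  by_cases hVc : Vᶜ.Nonempty
  · -- q = f(Vᶜ) ∈ Vᶜ, so q ≠ p; pick clopen C ∈ 𝒞 with q ∉ C
    set q := f ⟨Vᶜ, hVc, hV.isClosed_compl⟩ with hq
    have hqVc : q ∈ Vᶜ := hfsel ⟨Vᶜ, hVc, hV.isClosed_compl⟩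
    have hqp : q ≠ p := fun h => hqVc (h ▸ hpV)
    have hq' : q ∉ ⋂₀ 𝒞 := by rw [h𝒞inter]; simpa using hqp
    have : ∃ C ∈ 𝒞, q ∉ C := by
      by_contra h
      push_neg at h
      exact hq' fun C hC => h C hC
    obtain ⟨C, hC𝒞, hqC⟩ := this
    have hpC : p ∈ C := by
      have hp' : p ∈ ⋂₀ 𝒞 := by rw [h𝒞inter]; rfl
      exact hp' C hC𝒞
    -- the map g x = f (Vᶜ ∪ {x}) is continuous
    set g : X → X := fun x =>
      f ⟨Vᶜ ∪ {x}, ⟨x, Or.inr rfl⟩, hV.isClosed_compl.union isClosed_singleton⟩ with hgdef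
    have hgc : Continuous g :=
      hfc.comp (continuous_union_singleton Vᶜ hV.isClosed_compl)
    set B := bracketSel f V hV with hB
    have hBg : ∀ x, x ∈ B ↔ g x = x := fun x => Iff.rfl
    have hBclosed : IsClosed B := isClosed_eq hgc continuous_id
    have hgsel : ∀ x, g x ∈ Vᶜ ∪ {x} := fun x =>
      hfsel ⟨Vᶜ ∪ {x}, ⟨x, Or.inr rfl⟩, hV.isClosed_compl.union isClosed_singleton⟩
    -- p ∈ B
    have hpB : p ∈ B := hfmax _ (Or.inr rfl)
    -- C ∩ B ⊆ V
    have hsub : C ∩ B ⊆ V := by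
      rintro x ⟨hxC, hxB⟩
      by_contra hxV
      have hxVc : x ∈ Vᶜ := hxV
      have hcar : Vᶜ ∪ ({x} : Set X) = Vᶜ :=
        Set.union_eq_self_of_subset_right (by simpa using hxVc)
      have : g x = q := congrArg f (NEClosed.mk_eq_mk hcar)
      have hxq : x = q := by rw [← (hBg x).mp hxB, this]
      exact hqC (hxq ▸ hxC)
    -- C ∩ B is open
    have hopen : C ∩ B = C ∩ g ⁻¹' V := by
      ext x
      simp only [Set.mem_inter_iff, Set.mem_preimage]
      constructor
      · rintro ⟨hxC, hxB⟩
        have hxV : x ∈ V := hsub ⟨hxC, hxB⟩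
        have hgx : g x = x := (hBg x).mp hxB
        exact ⟨hxC, by rw [hgx]; exact hxV⟩
      · rintro ⟨hxC, hxV⟩
        refine ⟨hxC, (hBg x).mpr ?_⟩
        rcases hgsel x with h | h
        · exact absurd hxV h
        · exact h
    refine ⟨C ∩ B, ⟨(h𝒞clopen C hC𝒞).isClosed.inter hBclosed, ?_⟩, ⟨hpC, hpB⟩, hsub⟩
    rw [hopen]
    exact (h𝒞clopen C hC𝒞).isOpen.inter (hV.preimage hgc)
  · -- Vᶜ = ∅, so V = univ
    rw [Set.not_nonempty_iff_eq_empty, Set.compl_empty_iff] at hVc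
    exact ⟨Set.univ, isClopen_univ, Set.mem_univ p, hVc ▸ Set.Subset.rfl⟩
end

section
/- Let X be a Hausdorff space which admits a p-maximal continuous selection for 𝓕(X), where p ∈ X is a cut point of X. Then X is zero-dimensional at p, i.e. p has a neighbourhood base of clopen sets. -/
open Set Topology Filter

universe u v

section AuxSel

variable {X : Type u} [TopologicalSpace X]

/-- Adding a point to a fixed closed set, as a map into the hyperspace. -/
def addPt [T1Space X] (F : Set X) (hF : IsClosed F) (x : X) : NEClosed X :=
  ⟨F ∪ {x}, ⟨x, Or.inr rfl⟩, hF.union isClosed_singleton⟩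

theorem continuous_addPt [T1Space X] (F : Set X) (hF : IsClosed F) : Continuous (addPt F hF) := by
  classical
  apply continuous_generateFrom_iff.mpr
  rintro t ⟨𝒱, h𝒱fin, h𝒱open, rfl⟩
  have hpre : addPt F hF ⁻¹' NEClosed.basicSet 𝒱 =
      if F ⊆ ⋃₀ 𝒱 then (⋃₀ 𝒱) ∩ ⋂ V ∈ 𝒱, {x | (F ∩ V).Nonempty ∨ x ∈ V} else ∅ := by
    ext x
    by_cases hsub : F ⊆ ⋃₀ 𝒱
    · simp only [if_pos hsub, mem_preimage, NEClosed.basicSet, addPt, mem_setOf_eq,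
        mem_inter_iff, mem_iInter]
      constructor
      · rintro ⟨h1, h2⟩
        refine ⟨h1 (Or.inr rfl), fun V hV => ?_⟩
        obtain ⟨y, hy1, hy2⟩ := h2 V hV
        rcases hy1 with hy | hy
        · exact Or.inl ⟨y, hy, hy2⟩
        · exact Or.inr (by rwa [show y = x from hy] at hy2)
      · rintro ⟨h1, h2⟩
        refine ⟨?_, fun V hV => ?_⟩
        · rintro y (hy | hy)
          · exact hsub hy
          · rw [mem_singleton_iff] at hy; subst hy; exact h1
        · rcases h2 V hV with ⟨y, hy1, hy2⟩ | hx
          · exact ⟨y, Or.inl hy1, hy2⟩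
          · exact ⟨x, Or.inr rfl, hx⟩
    · simp only [if_neg hsub, mem_preimage, NEClosed.basicSet, addPt, mem_setOf_eq,
        mem_empty_iff_false, iff_false]
      rintro ⟨h1, -⟩
      exact hsub fun y hy => h1 (Or.inl hy)
  rw [hpre]
  split
  · refine IsOpen.inter (isOpen_sUnion fun V hV => h𝒱open V hV)
      (Set.Finite.isOpen_biInter h𝒱fin fun V hV => ?_)
    by_cases h : (F ∩ V).Nonempty
    · have he : {x : X | (F ∩ V).Nonempty ∨ x ∈ V} = univ := eq_univ_of_forall fun x => Or.inl h
      rw [he]; exact isOpen_univ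
    · have he : {x : X | (F ∩ V).Nonempty ∨ x ∈ V} = V := by
        ext x; simp [h]
      rw [he]; exact h𝒱open V hV
  · exact isOpen_empty

/-- Extracting quantitative Vietoris continuity data at a point of the hyperspace. -/
theorem exists_finite_opens {f : NEClosed X → X} (hfc : Continuous f)
    (S : NEClosed X) {W : Set X} (hW : IsOpen W) (hfS : f S ∈ W) :
    ∃ 𝒰 : Set (Set X), 𝒰.Finite ∧ (∀ V ∈ 𝒰, IsOpen V ∧ (S.carrier ∩ V).Nonempty) ∧
      ∀ T : NEClosed X, T.carrier ⊆ S.carrier → (∀ V ∈ 𝒰, (T.carrier ∩ V).Nonempty) →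
        f T ∈ W := by
  classical
  have hbasis := TopologicalSpace.isTopologicalBasis_of_subbasis
    (t := (inferInstance : TopologicalSpace (NEClosed X)))
    (s := {t | ∃ 𝒱 : Set (Set X), 𝒱.Finite ∧ (∀ V ∈ 𝒱, IsOpen V) ∧ t = NEClosed.basicSet 𝒱}) rfl
  obtain ⟨v, hv, hSv, hvsub⟩ := hbasis.exists_subset_of_mem_open
    (show S ∈ f ⁻¹' W from hfS) (hW.preimage hfc)
  obtain ⟨𝔉, ⟨h𝔉fin, h𝔉sub⟩, rfl⟩ := hv
  have hchoice : ∀ t : Set (NEClosed X), ∃ 𝒱 : Set (Set X), t ∈ 𝔉 →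
      (𝒱.Finite ∧ (∀ V ∈ 𝒱, IsOpen V) ∧ t = NEClosed.basicSet 𝒱) := by
    intro t
    by_cases ht : t ∈ 𝔉
    · obtain ⟨𝒱, h⟩ := h𝔉sub ht
      exact ⟨𝒱, fun _ => h⟩
    · exact ⟨∅, fun h => absurd h ht⟩
  choose g hgspec' using hchoice
  have hgspec : ∀ t ∈ 𝔉, (g t).Finite ∧ (∀ V ∈ g t, IsOpen V) ∧ t = NEClosed.basicSet (g t) :=
    fun t ht => hgspec' t ht
  have hSmem : ∀ t ∈ 𝔉, S ∈ t := fun t ht => hSv t ht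
  refine ⟨⋃ t ∈ 𝔉, g t, h𝔉fin.biUnion fun t ht => (hgspec t ht).1, ?_, ?_⟩
  · intro V hV
    simp only [mem_iUnion] at hV
    obtain ⟨t, ht, hVt⟩ := hV
    have hS : S ∈ t := hSmem t ht
    rw [(hgspec t ht).2.2] at hS
    exact ⟨(hgspec t ht).2.1 V hVt, hS.2 V hVt⟩
  · intro T hTsub hTmeet
    apply hvsub
    intro t ht
    rw [(hgspec t ht).2.2]
    have hS : S ∈ t := hSmem t ht
    rw [(hgspec t ht).2.2] at hS
    refine ⟨hTsub.trans hS.1, fun V hV => hTmeet V ?_⟩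
    exact mem_iUnion₂.mpr ⟨t, ht, hV⟩

end AuxSel


/-- The key one-sided construction: given the selection and the two halves `A`, `B` of the
cut, produce an open set `G ∋ p` whose trace on `closure B` is closed and inside `W`. -/
theorem side_lemma {X : Type u} [TopologicalSpace X] [T2Space X]
    {f : NEClosed X → X} (hf : IsVSelection f) {p : X} (hmax : PMaximal f p)
    {A B : Set X} (hpA : p ∈ closure A) (hpnA : p ∉ A)
    (hclA : closure A = A ∪ {p}) (hclB : closure B = B ∪ {p})
    (hABdisj : A ∩ closure B = ∅)
    {W : Set X} (hW : IsOpen W) (hpW : p ∈ W) :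
    ∃ G : Set X, IsOpen G ∧ p ∈ G ∧ IsClosed (G ∩ closure B) ∧ G ∩ closure B ⊆ W := by
  classical
  obtain ⟨a, ha⟩ : A.Nonempty := by
    by_contra h
    rw [not_nonempty_iff_eq_empty] at h
    rw [h, closure_empty] at hpA
    exact hpA
  set BW : Set X := closure B \ W with hBW
  have hBWclosed : IsClosed BW := isClosed_closure.sdiff hW
  set S₀ : NEClosed X :=
    ⟨BW ∪ closure A, ⟨p, Or.inr hpA⟩, hBWclosed.union isClosed_closure⟩ with hS₀
  have hfS₀ : f S₀ = p := hmax S₀ (Or.inr hpA)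
  obtain ⟨𝒰, h𝒰fin, h𝒰prop, h𝒰key⟩ := exists_finite_opens hf.1 S₀ hW (hfS₀ ▸ hpW)
  -- pick, for each member of 𝒰, a witness in S₀ different from p
  have hwit : ∀ V ∈ 𝒰, ∃ s, s ∈ S₀.carrier ∧ s ≠ p ∧ s ∈ V := by
    intro V hV
    obtain ⟨hVopen, ⟨s, hs, hsV⟩⟩ := h𝒰prop V hV
    by_cases hsp : s = p
    · subst hsp
      obtain ⟨y, hyV, hyA⟩ := mem_closure_iff.mp hpA V hVopen hsV
      exact ⟨y, Or.inr (subset_closure hyA), fun h => hpnA (h ▸ hyA), hyV⟩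
    · exact ⟨s, hs, hsp, hsV⟩
  have hwit' : ∀ V : Set X, ∃ s : X, V ∈ 𝒰 → s ∈ S₀.carrier ∧ s ≠ p ∧ s ∈ V := by
    intro V
    by_cases h : V ∈ 𝒰
    · obtain ⟨s, h1, h2, h3⟩ := hwit V h
      exact ⟨s, fun _ => ⟨h1, h2, h3⟩⟩
    · exact ⟨p, fun h' => absurd h' h⟩
  choose sel hsel using hwit'
  set E : Set X := insert a (sel '' 𝒰) with hE
  have hEfin : E.Finite := (h𝒰fin.image sel).insert a
  have hpE : p ∉ E := by
    intro hp
    rcases hp with hp | ⟨V, hV, hVp⟩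
    · exact hpnA (hp ▸ ha)
    · exact (hsel V hV).2.1 hVp
  set O : Set X := W \ E with hO
  have hOopen : IsOpen O := hW.sdiff hEfin.isClosed
  have hpO : p ∈ O := ⟨hpW, hpE⟩
  set Fc : Set X := BW ∪ (closure A \ O) with hFc
  have hFcclosed : IsClosed Fc := hBWclosed.union (isClosed_closure.sdiff hOopen)
  have haF : a ∈ Fc := Or.inr ⟨subset_closure ha, fun hin => hin.2 (Or.inl rfl)⟩
  set T : NEClosed X := ⟨Fc, ⟨a, haF⟩, hFcclosed⟩ with hT
  have hTsub : T.carrier ⊆ S₀.carrier := by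
    rintro x (hx | hx)
    · exact Or.inl hx
    · exact Or.inr hx.1
  have hTmeet : ∀ V ∈ 𝒰, (T.carrier ∩ V).Nonempty := by
    intro V hV
    obtain ⟨hs1, hs2, hs3⟩ := hsel V hV
    refine ⟨sel V, ?_, hs3⟩
    have hsnO : sel V ∉ O := fun hin => hin.2 (Or.inr ⟨V, hV, rfl⟩)
    rcases hs1 with h | h
    · exact Or.inl h
    · exact Or.inr ⟨h, hsnO⟩
  have hx₀W : f T ∈ W := h𝒰key T hTsub hTmeet
  have hx₀T : f T ∈ Fc := hf.2 T
  have hx₀A : f T ∈ A := by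
    rcases hx₀T with h | h
    · exact absurd hx₀W h.2
    · have h1 := h.1
      rw [hclA] at h1
      rcases h1 with h' | h'
      · exact h'
      · exact absurd ((show f T = p from h') ▸ hpO) h.2
  have hpFc : p ∉ Fc := by
    rintro (h | h)
    · exact h.2 hpW
    · exact h.2 hpO
  set hmap : X → X := fun x => f (addPt Fc hFcclosed x) with hhm
  have hhc : Continuous hmap := hf.1.comp (continuous_addPt Fc hFcclosed)
  have hhp : hmap p = p := hmax _ (Or.inr rfl)
  set G : Set X := Fcᶜ ∩ hmap ⁻¹' Fcᶜ with hG
  have hGopen : IsOpen G :=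
    hFcclosed.isOpen_compl.inter (hFcclosed.isOpen_compl.preimage hhc)
  have hpG : p ∈ G := ⟨hpFc, by rw [mem_preimage, hhp]; exact hpFc⟩
  have hGfix : ∀ x ∈ G, hmap x = x := by
    intro x hx
    rcases hf.2 (addPt Fc hFcclosed x) with h | h
    · exact absurd h hx.2
    · exact h
  have hKclosed : IsClosed {x : X | hmap x = x} := isClosed_eq hhc continuous_id
  refine ⟨G, hGopen, hpG, ?_, ?_⟩
  · apply isClosed_of_closure_subset
    intro x hx
    have hxB : x ∈ closure B := by
      have h := closure_mono (inter_subset_right (s := G)) hx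
      rwa [closure_closure] at h
    have hxK : hmap x = x :=
      closure_minimal (fun y hy => hGfix y hy) hKclosed (closure_mono inter_subset_left hx)
    by_cases hxF : x ∈ Fc
    · exfalso
      have heq : addPt Fc hFcclosed x = T := by
        apply NEClosed.ext'
        show Fc ∪ {x} = Fc
        rw [union_singleton, insert_eq_self.mpr hxF]
      have hx0 : f T = x := by rw [← heq]; exact hxK
      have hmem : f T ∈ A ∩ closure B := ⟨hx₀A, hx0 ▸ hxB⟩
      rw [hABdisj] at hmem
      exact hmem
    · exact ⟨⟨hxF, by rw [mem_preimage, hxK]; exact hxF⟩, hxB⟩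
  · rintro x ⟨⟨hxF, -⟩, hxB⟩
    have hxB' := hxB
    rw [hclB] at hxB'
    rcases hxB' with h | h
    · by_contra hxW
      exact hxF (Or.inl ⟨hxB, hxW⟩)
    · exact (show x = p from h) ▸ hpW


/-- If `𝓕(X)` admits a `p`-maximal continuous selection for a cut point `p` of `X`, then `X`
is zero-dimensional at `p`: `p` has a neighbourhood base of clopen sets. -/
theorem stmt_10 {X : Type u} [TopologicalSpace X] [T2Space X] (p : X)
    (hcut : ∃ U V : Set X, univ \ {p} = U ∪ V ∧ closure U ∩ closure V = {p})
    (hsel : ∃ f : NEClosed X → X, IsVSelection f ∧ PMaximal f p) :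
    ∀ V : Set X, IsOpen V → p ∈ V → ∃ U : Set X, IsClopen U ∧ p ∈ U ∧ U ⊆ V := by
  obtain ⟨U, V, hUV, hclUV⟩ := hcut
  obtain ⟨f, hf, hmax⟩ := hsel
  have hmemUV : ∀ x : X, x ≠ p → x ∈ U ∪ V := by
    intro x hx
    have h : x ∈ univ \ {p} := ⟨trivial, hx⟩
    rwa [hUV] at h
  have hpUV : p ∉ U ∪ V := by
    intro h
    rw [← hUV] at h
    exact h.2 rfl
  have hpU : p ∉ U := fun h => hpUV (Or.inl h)
  have hpV : p ∉ V := fun h => hpUV (Or.inr h)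
  have hpclUV : p ∈ closure U ∩ closure V := by
    rw [hclUV]; exact rfl
  have hpclU : p ∈ closure U := hpclUV.1
  have hpclV : p ∈ closure V := hpclUV.2
  have hclU : closure U = U ∪ {p} := by
    apply Subset.antisymm
    · intro x hx
      by_cases hxp : x = p
      · exact Or.inr hxp
      · rcases hmemUV x hxp with h | h
        · exact Or.inl h
        · exfalso
          have hm : x ∈ closure U ∩ closure V := ⟨hx, subset_closure h⟩
          rw [hclUV] at hm
          exact hxp hm
    · exact union_subset subset_closure (singleton_subset_iff.mpr hpclU)
  have hclV : closure V = V ∪ {p} := by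
    apply Subset.antisymm
    · intro x hx
      by_cases hxp : x = p
      · exact Or.inr hxp
      · rcases hmemUV x hxp with h | h
        · exfalso
          have hm : x ∈ closure U ∩ closure V := ⟨subset_closure h, hx⟩
          rw [hclUV] at hm
          exact hxp hm
        · exact Or.inl h
    · exact union_subset subset_closure (singleton_subset_iff.mpr hpclV)
  have hUclVdisj : U ∩ closure V = ∅ := by
    ext x
    simp only [mem_inter_iff, mem_empty_iff_false, iff_false, not_and]
    intro h1 h2
    have hm : x ∈ closure U ∩ closure V := ⟨subset_closure h1, h2⟩
    rw [hclUV] at hm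
    exact hpU ((show x = p from hm) ▸ h1)
  have hVclUdisj : V ∩ closure U = ∅ := by
    ext x
    simp only [mem_inter_iff, mem_empty_iff_false, iff_false, not_and]
    intro h1 h2
    have hm : x ∈ closure U ∩ closure V := ⟨h2, subset_closure h1⟩
    rw [hclUV] at hm
    exact hpV ((show x = p from hm) ▸ h1)
  have hUopen : IsOpen U := by
    have he : U = (closure V)ᶜ := by
      apply Subset.antisymm
      · intro x hx hxc
        have hm : x ∈ U ∩ closure V := ⟨hx, hxc⟩
        rw [hUclVdisj] at hm
        exact hm
      · intro x hx
        by_cases hxp : x = p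
        · exact absurd (hxp ▸ hpclV) hx
        · rcases hmemUV x hxp with h | h
          · exact h
          · exact absurd (subset_closure h) hx
    rw [he]
    exact isClosed_closure.isOpen_compl
  have hVopen : IsOpen V := by
    have he : V = (closure U)ᶜ := by
      apply Subset.antisymm
      · intro x hx hxc
        have hm : x ∈ V ∩ closure U := ⟨hx, hxc⟩
        rw [hVclUdisj] at hm
        exact hm
      · intro x hx
        by_cases hxp : x = p
        · exact absurd (hxp ▸ hpclU) hx
        · rcases hmemUV x hxp with h | h
          · exact absurd (subset_closure h) hx
          · exact h
    rw [he]
    exact isClosed_closure.isOpen_compl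
  intro W hWopen hpW
  obtain ⟨G₁, hG₁o, hpG₁, hC₁c, hC₁W⟩ :=
    side_lemma hf hmax hpclU hpU hclU hclV hUclVdisj hWopen hpW
  obtain ⟨G₂, hG₂o, hpG₂, hC₂c, hC₂W⟩ :=
    side_lemma hf hmax hpclV hpV hclV hclU hVclUdisj hWopen hpW
  refine ⟨(G₂ ∩ closure U) ∪ (G₁ ∩ closure V), ⟨hC₂c.union hC₁c, ?_⟩,
    Or.inl ⟨hpG₂, hpclU⟩, union_subset hC₂W hC₁W⟩
  rw [isOpen_iff_forall_mem_open]
  intro x hx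
  by_cases hxp : x = p
  · refine ⟨G₂ ∩ G₁, ?_, hG₂o.inter hG₁o, by rw [hxp]; exact ⟨hpG₂, hpG₁⟩⟩
    rintro y ⟨hy2, hy1⟩
    by_cases hyp : y = p
    · exact Or.inl ⟨hy2, hyp ▸ hpclU⟩
    · rcases hmemUV y hyp with h | h
      · exact Or.inl ⟨hy2, subset_closure h⟩
      · exact Or.inr ⟨hy1, subset_closure h⟩
  · rcases hx with ⟨hxG, hxcl⟩ | ⟨hxG, hxcl⟩
    · have hxU : x ∈ U := by
        rw [hclU] at hxcl
        rcases hxcl with h | h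
        · exact h
        · exact absurd h hxp
      exact ⟨G₂ ∩ U, fun y hy => Or.inl ⟨hy.1, subset_closure hy.2⟩,
        hG₂o.inter hUopen, hxG, hxU⟩
    · have hxV : x ∈ V := by
        rw [hclV] at hxcl
        rcases hxcl with h | h
        · exact h
        · exact absurd h hxp
      exact ⟨G₁ ∩ V, fun y hy => Or.inr ⟨hy.1, subset_closure hy.2⟩,
        hG₁o.inter hVopen, hxG, hxV⟩
end

section
/- Let f be a p-maximal continuous selection for 𝓕(X), where p ∈ X is a cut point of X, and let (X₀, X₁) be a p-cut of X. Suppose U_n ⊆ X, n < ω, are open sets such that p ∈ U_{n+1} ⊆ ⟨U_n⟩_f for every n < ω, and f(X \ U_{2k+i}) ∈ X_i for every k < ω and i ∈ {0,1}. Then {U_n : n < ω} is a neighbourhood base at p. -/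
open Set Topology Filter

universe u v

theorem neclosed_tendsto {X : Type u} [TopologicalSpace X]
    (S : ℕ → NEClosed X) (T : NEClosed X)
    (h1 : ∀ n, (S n).carrier ⊆ T.carrier)
    (h2 : ∀ W : Set X, IsOpen W → (T.carrier ∩ W).Nonempty →
      ∀ᶠ n in atTop, ((S n).carrier ∩ W).Nonempty) :
    Tendsto S atTop (𝓝 T) := by
  refine TopologicalSpace.tendsto_nhds_generateFrom_iff.mpr ?_
  rintro s ⟨𝒱, hfin, hop, rfl⟩ ⟨hTsub, hTmeet⟩
  have hev : ∀ᶠ n in atTop, ∀ V ∈ 𝒱, ((S n).carrier ∩ V).Nonempty :=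
    (Set.Finite.eventually_all hfin).mpr fun V hV => h2 V (hop V hV) (hTmeet V hV)
  filter_upwards [hev] with n hn
  exact ⟨(h1 n).trans hTsub, hn⟩

/-- If `f` is a `p`-maximal continuous selection, `(X₀, X₁)` is a `p`-cut of `X`, and
`U n` are open sets with `p ∈ U (n+1) ⊆ ⟨U n⟩_f` and `f(X \ U (2k+i)) ∈ Xᵢ`, then
`{U n : n < ω}` is a neighbourhood base at `p`. -/
theorem stmt_11 {X : Type u} [TopologicalSpace X] [T2Space X]
    (f : NEClosed X → X) (hf : IsVSelection f) (p : X) (hfp : PMaximal f p)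
    (X0 X1 : Set X) (hcut : univ \ {p} = X0 ∪ X1) (hclos : closure X0 ∩ closure X1 = {p})
    (U : ℕ → Set X) (hUo : ∀ n, IsOpen (U n))
    (hUp : ∀ n, p ∈ U (n + 1)) (hUsub : ∀ n, U (n + 1) ⊆ angleSel f (U n) (hUo n))
    (hne : ∀ n, (U n)ᶜ.Nonempty)
    (hX0 : ∀ k, f ⟨(U (2 * k))ᶜ, hne (2 * k), (hUo (2 * k)).isClosed_compl⟩ ∈ X0)
    (hX1 : ∀ k, f ⟨(U (2 * k + 1))ᶜ, hne (2 * k + 1), (hUo (2 * k + 1)).isClosed_compl⟩ ∈ X1) :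
    (∀ n, p ∈ U n) ∧ ∀ V : Set X, IsOpen V → p ∈ V → ∃ n, U n ⊆ V := by
  classical
  set F : ℕ → NEClosed X := fun n => ⟨(U n)ᶜ, hne n, (hUo n).isClosed_compl⟩ with hF
  have hsub : ∀ n, U (n + 1) ⊆ U n := fun n x hx => ((hUsub n) hx).2
  have hanti : Antitone U := antitone_nat_of_succ_le hsub
  have hpU : ∀ n, p ∈ U n := fun n => Nat.casesOn n (hsub 0 (hUp 0)) hUp
  set A : Set X := ⋃ n, (U n)ᶜ with hA
  have hGne : (closure A).Nonempty :=
    (hne 0).mono ((subset_iUnion (fun n => (U n)ᶜ) 0).trans subset_closure)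
  set G : NEClosed X := ⟨closure A, hGne, isClosed_closure⟩ with hG
  have hbr : ∀ n x, x ∈ U (n + 1) →
      f ⟨(U n)ᶜ ∪ {x}, ⟨x, Or.inr rfl⟩,
        ((hUo n).isClosed_compl).union isClosed_singleton⟩ = x :=
    fun n x hx => ((hUsub n) hx).1
  have hmeet : ∀ W : Set X, IsOpen W → (closure A ∩ W).Nonempty →
      ∀ᶠ n in atTop, ((U n)ᶜ ∩ W).Nonempty := by
    rintro W hW ⟨x, hxc, hxW⟩
    obtain ⟨y, hyW, hyA⟩ := mem_closure_iff.mp hxc W hW hxW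
    obtain ⟨m, hym⟩ := mem_iUnion.mp hyA
    filter_upwards [eventually_ge_atTop m] with n hn
    exact ⟨y, compl_subset_compl.mpr (hanti hn) hym, hyW⟩
  have hFG : Tendsto F atTop (𝓝 G) :=
    neclosed_tendsto F G (fun n => (subset_iUnion (fun n => (U n)ᶜ) n).trans subset_closure) hmeet
  have hq : Tendsto (fun n => f (F n)) atTop (𝓝 (f G)) := (hf.1.tendsto G).comp hFG
  have h2k : Tendsto (fun k => 2 * k) atTop atTop :=
    tendsto_atTop_atTop.mpr fun b => ⟨b, fun a ha => by omega⟩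
  have h2k1 : Tendsto (fun k => 2 * k + 1) atTop atTop :=
    tendsto_atTop_atTop.mpr fun b => ⟨b, fun a ha => by omega⟩
  have hq0 : f G ∈ closure X0 :=
    mem_closure_of_tendsto (hq.comp h2k) (Eventually.of_forall fun k => hX0 k)
  have hq1 : f G ∈ closure X1 :=
    mem_closure_of_tendsto (hq.comp h2k1) (Eventually.of_forall fun k => hX1 k)
  have hfGp : f G = p := by
    have : f G ∈ closure X0 ∩ closure X1 := ⟨hq0, hq1⟩
    rw [hclos] at this
    exact this
  have hpG : p ∈ closure A := hfGp ▸ hf.2 G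
  have hGuniv : closure A = univ := by
    by_contra h
    obtain ⟨x, hx⟩ := (ne_univ_iff_exists_notMem _).mp h
    have hxU : ∀ n, x ∈ U n := fun n =>
      by_contra fun hc => hx (subset_closure (mem_iUnion.mpr ⟨n, hc⟩))
    set Sx : ℕ → NEClosed X := fun n =>
      ⟨(U n)ᶜ ∪ {x}, ⟨x, Or.inr rfl⟩,
        ((hUo n).isClosed_compl).union isClosed_singleton⟩ with hSxdef
    set Tx : NEClosed X :=
      ⟨closure A ∪ {x}, ⟨x, Or.inr rfl⟩, isClosed_closure.union isClosed_singleton⟩ with hTx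
    have hSx : Tendsto Sx atTop (𝓝 Tx) := by
      refine neclosed_tendsto Sx Tx
        (fun n => union_subset_union_left _
          ((subset_iUnion (fun n => (U n)ᶜ) n).trans subset_closure)) ?_
      rintro W hW ⟨z, hz | hz, hzW⟩
      · filter_upwards [hmeet W hW ⟨z, hz, hzW⟩] with n ⟨w, hw, hwW⟩
        exact ⟨w, Or.inl hw, hwW⟩
      · exact Eventually.of_forall fun n => ⟨x, Or.inr rfl, hz ▸ hzW⟩
    have hfx : ∀ n, f (Sx n) = x := fun n => hbr n x (hxU (n + 1))
    have hlim : Tendsto (fun n => f (Sx n)) atTop (𝓝 (f Tx)) := (hf.1.tendsto Tx).comp hSx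
    have hTxx : x = f Tx :=
      tendsto_nhds_unique ((tendsto_const_nhds (x := x) (f := atTop)).congr
        fun n => (hfx n).symm) hlim
    have hTxp : f Tx = p := hfp Tx (Or.inl hpG)
    exact hx (by rw [hTxx, hTxp]; exact hpG)
  refine ⟨hpU, ?_⟩
  intro V hV hpV
  by_contra hcon
  push_neg at hcon
  choose y hy1 hy2 using fun n => not_subset.mp (hcon (n + 1))
  set Sy : ℕ → NEClosed X := fun n =>
    ⟨(U n)ᶜ ∪ {y n}, ⟨y n, Or.inr rfl⟩,
      ((hUo n).isClosed_compl).union isClosed_singleton⟩ with hSydef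
  have hSy : Tendsto Sy atTop (𝓝 G) := by
    refine neclosed_tendsto Sy G (fun n z _ => by show z ∈ closure A; rw [hGuniv]; trivial) ?_
    intro W hW hWne
    filter_upwards [hmeet W hW hWne] with n ⟨w, hw, hwW⟩
    exact ⟨w, Or.inl hw, hwW⟩
  have hfy : ∀ n, f (Sy n) = y n := fun n => hbr n (y n) (hy1 n)
  have hylim : Tendsto y atTop (𝓝 p) := by
    have := (hf.1.tendsto G).comp hSy
    rw [hfGp] at this
    exact this.congr fun n => hfy n
  obtain ⟨n, hn⟩ := (hylim.eventually (hV.mem_nhds hpV)).exists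
  exact hy2 n hn
end
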